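/- arXiv:0710.4539 — 3 statements merged into one kernel-verified Lean document; each statement's English description precedes it below -/
import Mathlib

section
/- Let M be a d-cone of Radon measures on ℝ^n, let μ, μ₁, μ₂, … be Radon measures on ℝ^n with μ_i → μ, and let s > 0 be such that F_s(μ) > 0. Then lim_{i→∞} d_s(μ_i, M) exists and equals d_s(μ, M). -/
open MeasureTheory Metric Filter Set Topology
open scoped ENNReal NNReal Classical

noncomputable section

abbrev Euc (n : ℕ) : Type := EuclideanSpace ℝ (Fin n)

namespace KPT

variable {n : ℕ}

/-- The support of a Radon measure. -/
def msupport (μ : Measure (Euc n)) : Set (Euc n) :=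
  {x | ∀ r : ℝ, 0 < r → 0 < μ (ball x r)}

/-- `F_K(μ) = ∫ dist(z, Kᶜ) dμ`. -/
def FK (K : Set (Euc n)) (μ : Measure (Euc n)) : ℝ≥0∞ :=
  ∫⁻ z, ENNReal.ofReal (infDist z Kᶜ) ∂μ

/-- `F_s(μ) = ∫ (s - ‖z‖)⁺ dμ = F_{B(0,s)}(μ)`. -/
def Fb (s : ℝ) (μ : Measure (Euc n)) : ℝ≥0∞ :=
  ∫⁻ z, ENNReal.ofReal (s - ‖z‖) ∂μ

/-- `F_K(μ, ν)`, the sup over nonnegative `1`-Lipschitz `f` supported in `K` of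
`|∫ f dμ - ∫ f dν|`. -/
def FKd (K : Set (Euc n)) (μ ν : Measure (Euc n)) : ℝ≥0∞ :=
  ⨆ f ∈ {f : Euc n → ℝ | (∀ x, 0 ≤ f x) ∧ LipschitzWith 1 f ∧ tsupport f ⊆ K},
    (((∫⁻ z, ENNReal.ofReal (f z) ∂μ) - (∫⁻ z, ENNReal.ofReal (f z) ∂ν)) ⊔
      ((∫⁻ z, ENNReal.ofReal (f z) ∂ν) - (∫⁻ z, ENNReal.ofReal (f z) ∂μ)))

/-- `F_r(μ, ν) = F_{B(0,r)}(μ, ν)`. -/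
def Fbd (s : ℝ) (μ ν : Measure (Euc n)) : ℝ≥0∞ := FKd (closedBall 0 s) μ ν

/-- Convergence `μ_i → μ` of Radon measures. -/
def MConv (μi : ℕ → Measure (Euc n)) (μ : Measure (Euc n)) : Prop :=
  ∀ K : Set (Euc n), IsCompact K →
    Filter.limsup (fun i => FK K (μi i)) atTop < ⊤ ∧
    Tendsto (fun i => FKd K (μi i) μ) atTop (𝓝 0)

/-- `T_{x,r}[μ]`, the image of `μ` under `z ↦ (z - x)/r`. -/
def Tmap (x : Euc n) (r : ℝ) (μ : Measure (Euc n)) : Measure (Euc n) :=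
  Measure.map (fun z => r⁻¹ • (z - x)) μ

/-- A `d`-cone of (nonzero) Radon measures. -/
def IsDCone (M : Set (Measure (Euc n))) : Prop :=
  (∀ μ ∈ M, μ ≠ 0) ∧
  (∀ μ ∈ M, ∀ c : ℝ, 0 < c → ENNReal.ofReal c • μ ∈ M) ∧
  (∀ μ ∈ M, ∀ r : ℝ, 0 < r → Tmap 0 r μ ∈ M)

/-- `d_s(μ, M)`, the distance from `μ` to the `d`-cone `M` at scale `s`. -/
def dDist (s : ℝ) (μ : Measure (Euc n)) (M : Set (Measure (Euc n))) : ℝ≥0∞ :=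
  if 0 < Fb s μ ∧ Fb s μ < ⊤ then
    ⨅ Ψ ∈ {Ψ ∈ M | Fb s Ψ = 1}, Fbd s ((Fb s μ)⁻¹ • μ) Ψ
  else 1

/-- The tangent measures of `η` at `x`. -/
def Tang (η : Measure (Euc n)) (x : Euc n) : Set (Measure (Euc n)) :=
  {ν | ν ≠ 0 ∧ ∃ (r : ℕ → ℝ) (c : ℕ → ℝ≥0∞),
    (∀ k, 0 < r k) ∧ Tendsto r atTop (𝓝 0) ∧ (∀ k, 0 < c k ∧ c k < ⊤) ∧
    MConv (fun k => c k • Tmap x (r k) η) ν}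

/-- `F` is relatively closed with respect to weak convergence of Radon measures. -/
def RelClosed (F : Set (Measure (Euc n))) : Prop :=
  ∀ (μi : ℕ → Measure (Euc n)) (μ : Measure (Euc n)),
    (∀ i, μi i ∈ F) → MConv μi μ → μ ≠ 0 → μ ∈ F

/-- The `d`-cone `M` has a (sequentially) compact basis `{Ψ ∈ M | F₁(Ψ) = 1}`. -/
def HasCompactBasis (M : Set (Measure (Euc n))) : Prop :=
  ∀ μi : ℕ → Measure (Euc n), (∀ i, μi i ∈ M ∧ Fb 1 (μi i) = 1) →
    ∃ φ : ℕ → ℕ, StrictMono φ ∧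
      ∃ μ, μ ∈ M ∧ Fb 1 μ = 1 ∧ MConv (fun k => μi (φ k)) μ

/-- The Laplacian of `f : ℝⁿ → ℝ`. -/
def lap (f : Euc n → ℝ) (x : Euc n) : ℝ :=
  ∑ i : Fin n, fderiv ℝ (fun y => fderiv ℝ f y (EuclideanSpace.single i 1)) x
    (EuclideanSpace.single i 1)

/-- `f` is harmonic on the open set `U`. -/
def HarmOn (f : Euc n → ℝ) (U : Set (Euc n)) : Prop :=
  ContDiffOn ℝ 2 f U ∧ ∀ x ∈ U, lap f x = 0

/-- `(u, ω)` is a Green function / harmonic measure pair for `D` with pole `X0`. -/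
def GreenPair (D : Set (Euc n)) (X0 : Euc n) (u : Euc n → ℝ) (ω : Measure (Euc n)) : Prop :=
  ContinuousOn u {X0}ᶜ ∧ (∀ x ∈ D, x ≠ X0 → 0 < u x) ∧ (∀ x ∉ D, u x = 0) ∧
  HarmOn u (D \ {X0}) ∧ IsLocallyFiniteMeasure ω ∧ msupport ω ⊆ frontier D ∧
  ∀ φ : Euc n → ℝ, ContDiff ℝ (⊤ : ℕ∞) φ → HasCompactSupport φ → X0 ∉ tsupport φ →
    ∫ x in D, u x * lap φ x = ∫ x, φ x ∂ω

/-- `g` is the distributional gradient of `u` on `B`. -/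
def WeakGradOn (u : Euc n → ℝ) (g : Euc n → Euc n) (B : Set (Euc n)) : Prop :=
  ∀ φ : Euc n → ℝ, ContDiff ℝ (⊤ : ℕ∞) φ → tsupport φ ⊆ B →
    ∀ i : Fin n,
      ∫ x, u x * fderiv ℝ φ x (EuclideanSpace.single i 1) = - ∫ x, g x i * φ x

/-- `u` belongs to the Sobolev space `H¹(B)`. -/
def MemH1 (u : Euc n → ℝ) (B : Set (Euc n)) : Prop :=
  ∃ g : Euc n → Euc n, Measurable g ∧
    (∫⁻ x in B, ENNReal.ofReal (‖g x‖ ^ 2)) < ⊤ ∧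
    (∫⁻ x in B, ENNReal.ofReal ((u x) ^ 2)) < ⊤ ∧
    WeakGradOn u g B

/-- `D` is regular for the Dirichlet problem. -/
def DirichletRegular (D : Set (Euc n)) : Prop :=
  ∀ f : Euc n → ℝ, Continuous f → ∃ v : Euc n → ℝ,
    ContinuousOn v (closure D) ∧ HarmOn v D ∧ ∀ x ∈ frontier D, v x = f x

/-- `Ω` is an admissible domain (with poles `Xp, Xm` and Green functions `up, um`). -/
def Admissible (Ω : Set (Euc n)) (Xp Xm : Euc n) (up um : Euc n → ℝ) : Prop :=
  IsOpen Ω ∧ DirichletRegular Ω ∧ DirichletRegular (interior Ωᶜ) ∧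
  frontier (interior Ωᶜ) = frontier Ω ∧
  ∀ Q ∈ frontier Ω, ∃ R : ℝ, 0 < R ∧
    R < min (infDist Xp (frontier Ω)) (infDist Xm (frontier Ω)) ∧
    ContinuousOn (fun x => up x - um x) (ball Q R) ∧
    MemH1 (fun x => up x - um x) (ball Q R)

/-- The (classical) gradient of a Green function, extended by `0` outside `D \ {X0}`. -/
def gradD (D : Set (Euc n)) (X0 : Euc n) (u : Euc n → ℝ) (x : Euc n) : Euc n :=
  if x ∈ D ∧ x ≠ X0 then gradient u x else 0

/-- `∫_{B(Q,r)} |∇u|² |X-Q|^{2-n} dX`. -/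
def energy (D : Set (Euc n)) (X0 : Euc n) (u : Euc n → ℝ) (Q : Euc n) (r : ℝ) : ℝ≥0∞ :=
  ∫⁻ x in ball Q r, ENNReal.ofReal (‖gradD D X0 u x‖ ^ 2 * ‖x - Q‖ ^ (2 - (n : ℝ)))

/-- `∫_{B(Q,r)} u² dX`. -/
def sqInt (u : Euc n → ℝ) (Q : Euc n) (r : ℝ) : ℝ≥0∞ :=
  ∫⁻ x in ball Q r, ENNReal.ofReal ((u x) ^ 2)

/-- The Alt–Caffarelli–Friedman functional `γ(Q,r)`. -/
def acf (Dp Dm : Set (Euc n)) (Xp Xm : Euc n) (up um : Euc n → ℝ) (Q : Euc n) (r : ℝ) :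
    ℝ≥0∞ :=
  (ENNReal.ofReal (r ^ (-2 : ℝ)) * energy Dp Xp up Q r) *
    (ENNReal.ofReal (r ^ (-2 : ℝ)) * energy Dm Xm um Q r)

/-- Chains of at most `M * k` overlapping balls in `D` joining `X₁` to `X₂`, of diameters
bounded below by the corkscrew constants and comparable to the distance to `∂D`. -/
def HarnackChains (D : Set (Euc n)) (M : ℝ) (X₁ X₂ : Euc n) (k : ℕ) : Prop :=
  ∃ N : ℕ, (N : ℝ) ≤ M * k ∧ ∃ c : ℕ → Euc n, ∃ ρ : ℕ → ℝ,
    (∀ j, j ≤ N → 0 < ρ j ∧ ball (c j) (ρ j) ⊆ D) ∧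
    X₁ ∈ ball (c 0) (ρ 0) ∧ X₂ ∈ ball (c N) (ρ N) ∧
    (∀ j, j < N → (ball (c j) (ρ j) ∩ ball (c (j + 1)) (ρ (j + 1))).Nonempty) ∧
    (∀ j, j ≤ N →
      M⁻¹ * min (infDist X₁ (frontier D)) (infDist X₂ (frontier D)) ≤ 2 * ρ j ∧
      M⁻¹ * infDist (c j) (frontier D) ≤ 2 * ρ j ∧
      2 * ρ j ≤ M * infDist (c j) (frontier D))

/-- The (local) corkscrew condition for `D`. -/
def LocCorkscrew (D : Set (Euc n)) : Prop :=
  ∀ K : Set (Euc n), IsCompact K → ∃ M : ℝ, 1 < M ∧ ∃ R : ℝ≥0∞, 0 < R ∧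
    (¬ Bornology.IsBounded D → R = ⊤) ∧
    ∀ Q ∈ frontier D ∩ K, ∀ r : ℝ, 0 < r → ENNReal.ofReal r ≤ R →
      ∃ A ∈ D, M⁻¹ * r < dist A Q ∧ dist A Q < r ∧ M⁻¹ * r < infDist A (frontier D)

/-- The (local) Harnack chain condition for `D`. -/
def LocHarnackChain (D : Set (Euc n)) : Prop :=
  ∀ K : Set (Euc n), IsCompact K → ∃ M : ℝ, 1 < M ∧ ∃ R : ℝ≥0∞, 0 < R ∧
    (¬ Bornology.IsBounded D → R = ⊤) ∧
    ∀ Q ∈ frontier D ∩ K, ∀ r : ℝ, 0 < r → ENNReal.ofReal r ≤ R →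
      ∀ ε : ℝ, 0 < ε → ∀ k : ℕ, ∀ X₁ ∈ D ∩ ball Q (r / 4), ∀ X₂ ∈ D ∩ ball Q (r / 4),
        ε < infDist X₁ (frontier D) → ε < infDist X₂ (frontier D) →
        dist X₁ X₂ < 2 ^ k * ε → HarnackChains D M X₁ X₂ k

/-- `D` is a locally NTA domain. -/
def LocNTA (D : Set (Euc n)) : Prop :=
  LocCorkscrew D ∧ LocCorkscrew (interior Dᶜ) ∧ LocHarnackChain D

/-- `Ω` is a 2-sided locally NTA domain. -/
def TwoSidedLocNTA (Ω : Set (Euc n)) : Prop :=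
  LocNTA Ω ∧ LocNTA (interior Ωᶜ)

/-- `D` is an unbounded NTA domain with NTA constant `M` (`R = ∞`). -/
def UnbNTAwith (D : Set (Euc n)) (M : ℝ) : Prop :=
  1 < M ∧
  (∀ Q ∈ frontier D, ∀ r : ℝ, 0 < r →
    ∃ A ∈ D, M⁻¹ * r < dist A Q ∧ dist A Q < r ∧ M⁻¹ * r < infDist A (frontier D)) ∧
  (∀ Q ∈ frontier D, ∀ r : ℝ, 0 < r →
    ∃ A ∈ interior Dᶜ, M⁻¹ * r < dist A Q ∧ dist A Q < r ∧
      M⁻¹ * r < infDist A (frontier D)) ∧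
  (∀ Q ∈ frontier D, ∀ r : ℝ, 0 < r → ∀ ε : ℝ, 0 < ε → ∀ k : ℕ,
    ∀ X₁ ∈ D ∩ ball Q (r / 4), ∀ X₂ ∈ D ∩ ball Q (r / 4),
      ε < infDist X₁ (frontier D) → ε < infDist X₂ (frontier D) →
      dist X₁ X₂ < 2 ^ k * ε → HarnackChains D M X₁ X₂ k)

/-- `D` is an unbounded NTA domain. -/
def UnbNTA (D : Set (Euc n)) : Prop := ∃ M : ℝ, UnbNTAwith D M

/-- `h(Q) = lim_{r→0} ω⁻(B(Q,r))/ω⁺(B(Q,r))`, as a choice of limit. -/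
def ratioLim (ωp ωm : Measure (Euc n)) (Q : Euc n) : ℝ≥0∞ :=
  limUnder (𝓝[>] (0 : ℝ)) (fun r => ωm (ball Q r) / ωp (ball Q r))

def Lambda1 (Ω : Set (Euc n)) (ωp ωm : Measure (Euc n)) : Set (Euc n) :=
  {Q | Q ∈ frontier Ω ∧ ∃ L : ℝ≥0∞, 0 < L ∧ L < ⊤ ∧
    Tendsto (fun r => ωm (ball Q r) / ωp (ball Q r)) (𝓝[>] (0 : ℝ)) (𝓝 L)}

def Lambda2 (Ω : Set (Euc n)) (ωp ωm : Measure (Euc n)) : Set (Euc n) :=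
  {Q | Q ∈ frontier Ω ∧
    Tendsto (fun r => ωm (ball Q r) / ωp (ball Q r)) (𝓝[>] (0 : ℝ)) (𝓝 ⊤)}

def Lambda3 (Ω : Set (Euc n)) (ωp ωm : Measure (Euc n)) : Set (Euc n) :=
  {Q | Q ∈ frontier Ω ∧
    Tendsto (fun r => ωm (ball Q r) / ωp (ball Q r)) (𝓝[>] (0 : ℝ)) (𝓝 0)}

def Lambda4 (Ω : Set (Euc n)) (ωp ωm : Measure (Euc n)) : Set (Euc n) :=
  {Q | Q ∈ frontier Ω ∧
    ¬ ∃ L : ℝ≥0∞, Tendsto (fun r => ωm (ball Q r) / ωp (ball Q r)) (𝓝[>] (0 : ℝ)) (𝓝 L)}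

/-- `|a - b|` in `ℝ≥0∞`. -/
def edd (a b : ℝ≥0∞) : ℝ≥0∞ := (a - b) ⊔ (b - a)

/-- The set `Γ` of Lebesgue points of `h = dω⁻/dω⁺`. -/
def GammaSet (Ω : Set (Euc n)) (ωp ωm : Measure (Euc n)) : Set (Euc n) :=
  {Q | Q ∈ Lambda1 Ω ωp ωm ∧
    Tendsto (fun r => (∫⁻ P in ball Q r, ratioLim ωp ωm P ∂ωp) / ωp (ball Q r))
      (𝓝[>] (0 : ℝ)) (𝓝 (ratioLim ωp ωm Q)) ∧
    Tendsto
      (fun r => (∫⁻ P in ball Q r, edd (ratioLim ωp ωm P) (ratioLim ωp ωm Q) ∂ωp) /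
        ωp (ball Q r)) (𝓝[>] (0 : ℝ)) (𝓝 0)}

/-- The `d`-cone of `(n-1)`-flat measures. -/
def Flat (n : ℕ) : Set (Measure (Euc n)) :=
  {μ | ∃ c : ℝ, 0 < c ∧ ∃ V : Submodule ℝ (Euc n), Module.finrank ℝ V = n - 1 ∧
    μ = ENNReal.ofReal c • (μH[(n : ℝ) - 1]).restrict (V : Set (Euc n))}

/-- `Γ*`, the points of `Γ` at which some tangent measure is flat. -/
def GammaStar (Ω : Set (Euc n)) (ωp ωm : Measure (Euc n)) : Set (Euc n) :=
  {Q | Q ∈ GammaSet Ω ωp ωm ∧ (Tang ωp Q ∩ Flat n).Nonempty}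

/-- `β_Σ(Q, r)`. -/
def betaSet (S : Set (Euc n)) (Q : Euc n) (r : ℝ) : ℝ :=
  ⨅ L : {L : Set (Euc n) | ∃ (x : Euc n) (W : Submodule ℝ (Euc n)),
      Module.finrank ℝ W = n - 1 ∧ L = {y | y - x ∈ W}},
    ⨆ y : (S ∩ ball Q r : Set (Euc n)), infDist (y : Euc n) (L : Set (Euc n)) / r

/-- `β_∞(P, r)`, measuring flatness of `∂Ω` in `B(P,r)` in Hausdorff distance. -/
def betaInfty (Ω : Set (Euc n)) (P : Euc n) (r : ℝ) : ℝ :=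
  ⨅ W : {W : Submodule ℝ (Euc n) // Module.finrank ℝ W = n - 1},
    hausdorffDist (frontier Ω ∩ ball P r)
      ({y | y - P ∈ (W : Submodule ℝ (Euc n))} ∩ ball P r) / r

/-- `Ω` is an `η`-Reifenberg flat domain. -/
def ReifFlat (Ω : Set (Euc n)) (η : ℝ) : Prop :=
  ∀ K : Set (Euc n), IsCompact K → ∃ rK : ℝ, 0 < rK ∧
    ∀ P ∈ frontier Ω ∩ K, ∀ r : ℝ, 0 < r → r < rK → betaInfty Ω P r < η

/-- `ω` is a locally doubling measure. -/
def LocDoubling (ω : Measure (Euc n)) : Prop :=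
  ∀ K : Set (Euc n), IsCompact K → K ⊆ msupport ω → ∃ C : ℝ≥0∞, 1 ≤ C ∧ ∃ R : ℝ, 0 < R ∧
    ∀ Q ∈ K, ∀ s : ℝ, 0 < s → s < R → ω (ball Q (2 * s)) ≤ C * ω (ball Q s)

/-- `limsup_{r→0} ω(B(Q,r))/r^{n-1}`. -/
def ldens (ω : Measure (Euc n)) (Q : Euc n) : ℝ≥0∞ :=
  Filter.limsup (fun r : ℝ => ω (ball Q r) / ENNReal.ofReal (r ^ ((n : ℝ) - 1)))
    (𝓝[>] (0 : ℝ))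

/-- The Hausdorff dimension `H-dim ω` of a measure `ω` on `∂Ω`. -/
def Hdim (Ω : Set (Euc n)) (ω : Measure (Euc n)) : ℝ :=
  sInf {k : ℝ | ∃ F : Set (Euc n), F ⊆ frontier Ω ∧ μH[k] F = 0 ∧
    ∀ K : Set (Euc n), IsCompact K → ω (F ∩ K) = ω (frontier Ω ∩ K)}

end KPT

namespace KPTAux
open KPT

variable {n : ℕ}

/-- The set of test functions used in `FKd`. -/
def TS (K : Set (Euc n)) : Set (Euc n → ℝ) :=
  {f : Euc n → ℝ | (∀ x, 0 ≤ f x) ∧ LipschitzWith 1 f ∧ tsupport f ⊆ K}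

lemma FKd_eq (K : Set (Euc n)) (α β : Measure (Euc n)) :
    FKd K α β = ⨆ f ∈ TS K,
      edd (∫⁻ z, ENNReal.ofReal (f z) ∂α) (∫⁻ z, ENNReal.ofReal (f z) ∂β) := rfl

lemma edd_self (a : ℝ≥0∞) : edd a a = 0 := by simp [edd]

lemma edd_comm (a b : ℝ≥0∞) : edd a b = edd b a := sup_comm _ _

lemma edd_triangle (a b c : ℝ≥0∞) : edd a c ≤ edd a b + edd b c := by
  refine sup_le ?_ ?_
  · exact (tsub_le_tsub_add_tsub (b := b)).trans (add_le_add le_sup_left le_sup_left)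
  · exact (tsub_le_tsub_add_tsub (b := b)).trans
      (by rw [add_comm]; exact add_le_add le_sup_right le_sup_right)

lemma edd_le_left (a b : ℝ≥0∞) : a - b ≤ edd a b := le_sup_left

lemma Fbd_def (s : ℝ) (α β : Measure (Euc n)) :
    Fbd s α β = FKd (closedBall (0 : Euc n) s) α β := rfl

lemma FKd_comm (K : Set (Euc n)) (α β : Measure (Euc n)) : FKd K α β = FKd K β α := by
  rw [FKd_eq, FKd_eq]
  exact iSup_congr fun f => iSup_congr fun _ => edd_comm _ _

set_option maxHeartbeats 1000000 in
lemma FKd_triangle (K : Set (Euc n)) (α β γ : Measure (Euc n)) :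
    FKd K α γ ≤ FKd K α β + FKd K β γ := by
  rw [FKd_eq, FKd_eq, FKd_eq]
  refine iSup₂_le fun f hf => (edd_triangle _ (∫⁻ z, ENNReal.ofReal (f z) ∂β) _).trans ?_
  exact add_le_add
    (le_iSup₂ (f := fun (f : Euc n → ℝ) (_ : f ∈ TS K) =>
      edd (∫⁻ z, ENNReal.ofReal (f z) ∂α) (∫⁻ z, ENNReal.ofReal (f z) ∂β)) f hf)
    (le_iSup₂ (f := fun (f : Euc n → ℝ) (_ : f ∈ TS K) =>
      edd (∫⁻ z, ENNReal.ofReal (f z) ∂β) (∫⁻ z, ENNReal.ofReal (f z) ∂γ)) f hf)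

lemma Fbd_triangle (s : ℝ) (α β γ : Measure (Euc n)) :
    Fbd s α γ ≤ Fbd s α β + Fbd s β γ := FKd_triangle _ _ _ _

lemma Fbd_comm (s : ℝ) (α β : Measure (Euc n)) : Fbd s α β = Fbd s β α := FKd_comm _ _ _

/-- The canonical test function `z ↦ max (s - ‖z‖) 0`. -/
def tf (s : ℝ) (z : Euc n) : ℝ := max (s - ‖z‖) 0

lemma tf_mem (s : ℝ) : tf s ∈ TS (closedBall (0 : Euc n) s) := by
  refine ⟨fun x => le_max_right _ _, ?_, ?_⟩
  · refine LipschitzWith.of_dist_le_mul fun x y => ?_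
    rw [NNReal.coe_one, one_mul, Real.dist_eq, dist_eq_norm]
    calc |tf s x - tf s y| ≤ |(s - ‖x‖) - (s - ‖y‖)| := abs_max_sub_max_le_abs _ _ _
      _ = |‖y‖ - ‖x‖| := by ring_nf
      _ ≤ ‖y - x‖ := abs_norm_sub_norm_le y x
      _ = ‖x - y‖ := norm_sub_rev y x
  · refine closure_minimal ?_ Metric.isClosed_closedBall
    intro z hz
    rw [Function.mem_support, tf] at hz
    have hpos : 0 < s - ‖z‖ := by
      by_contra h
      exact hz (max_eq_right (not_lt.1 h))
    rw [mem_closedBall_zero_iff]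
    linarith

lemma ofReal_tf (s : ℝ) (z : Euc n) :
    ENNReal.ofReal (tf s z) = ENNReal.ofReal (s - ‖z‖) := by
  rcases le_total (s - ‖z‖) 0 with h | h
  · simp [tf, max_eq_right h, ENNReal.ofReal_eq_zero.2 h]
  · simp [tf, max_eq_left h]

lemma Fb_eq_tf (s : ℝ) (α : Measure (Euc n)) :
    Fb s α = ∫⁻ z, ENNReal.ofReal (tf s z) ∂α := by
  rw [Fb]; exact (lintegral_congr fun z => (ofReal_tf s z).symm)

set_option maxHeartbeats 1000000 in
lemma edd_Fb_le (s : ℝ) (α β : Measure (Euc n)) : edd (Fb s α) (Fb s β) ≤ Fbd s α β := by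
  rw [Fb_eq_tf, Fb_eq_tf, Fbd, FKd_eq]
  exact le_iSup₂ (f := fun (f : Euc n → ℝ) (_ : f ∈ TS (closedBall (0:Euc n) s)) =>
    edd (∫⁻ z, ENNReal.ofReal (f z) ∂α) (∫⁻ z, ENNReal.ofReal (f z) ∂β)) (tf s) (tf_mem s)

lemma Fb_lt_top (s : ℝ) (α : Measure (Euc n)) (hα : IsLocallyFiniteMeasure α) :
    Fb s α < ⊤ := by
  haveI := hα
  have hb : Fb s α ≤ ∫⁻ z in closedBall (0 : Euc n) s, ENNReal.ofReal s ∂α := by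
    rw [Fb, ← lintegral_indicator measurableSet_closedBall]
    refine lintegral_mono fun z => ?_
    by_cases hz : z ∈ closedBall (0 : Euc n) s
    · rw [Set.indicator_of_mem hz]
      exact ENNReal.ofReal_le_ofReal (by linarith [norm_nonneg z])
    · rw [mem_closedBall_zero_iff, not_le] at hz
      have h0 : ENNReal.ofReal (s - ‖z‖) = 0 :=
        ENNReal.ofReal_eq_zero.2 (by linarith)
      simp [h0]
  refine hb.trans_lt ?_
  rw [setLIntegral_const]
  exact ENNReal.mul_lt_top ENNReal.ofReal_lt_top (isCompact_closedBall _ _).measure_lt_top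

/-- For `n ≥ 1`, every test function is dominated by `z ↦ (s - ‖z‖)⁺`. -/
lemma test_le {s : ℝ} (hn : 0 < n) {f : Euc n → ℝ}
    (hf : f ∈ TS (closedBall (0 : Euc n) s)) (z : Euc n) :
    ENNReal.ofReal (f z) ≤ ENNReal.ofReal (s - ‖z‖) := by
  obtain ⟨hf0, hfl, hfs⟩ := hf
  by_cases hz : s < ‖z‖
  · have hzs : z ∉ tsupport f := fun h => by
      have := hfs h
      rw [mem_closedBall_zero_iff] at this
      linarith
    rw [image_eq_zero_of_notMem_tsupport hzs]
    simp
  · push_neg at hz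
    refine ENNReal.ofReal_le_ofReal ?_
    refine le_of_forall_pos_le_add fun ε hε => ?_
    set e : Euc n := EuclideanSpace.single ⟨0, hn⟩ 1 with he
    have hne : ‖e‖ = 1 := by rw [he, EuclideanSpace.norm_single]; norm_num
    set u : Euc n := if z = 0 then e else ‖z‖⁻¹ • z with hu
    have hnu : ‖u‖ = 1 := by
      rw [hu]; split_ifs with h
      · exact hne
      · rw [norm_smul, norm_inv, norm_norm, inv_mul_cancel₀ (norm_ne_zero_iff.2 h)]
    set t : ℝ := s - ‖z‖ + ε with ht
    have htpos : 0 < t := by rw [ht]; linarith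
    set w : Euc n := z + t • u with hw
    have hnw : ‖w‖ = ‖z‖ + t := by
      rw [hw, hu]; split_ifs with h
      · rw [h, norm_zero, zero_add, zero_add, norm_smul, hne, mul_one, Real.norm_eq_abs,
          abs_of_pos htpos]
      · have hz0 : (0:ℝ) < ‖z‖ := norm_pos_iff.2 h
        rw [smul_smul]
        have : z + (t * ‖z‖⁻¹) • z = (1 + t * ‖z‖⁻¹) • z := by
          rw [add_smul, one_smul]
        rw [this, norm_smul, Real.norm_eq_abs, abs_of_pos (by positivity), add_mul,
          one_mul, mul_assoc, inv_mul_cancel₀ hz0.ne', mul_one]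
    have hwn : w ∉ tsupport f := fun hmem => by
      have := hfs hmem
      rw [mem_closedBall_zero_iff, hnw, ht] at this
      linarith [norm_nonneg z]
    have hfw : f w = 0 := image_eq_zero_of_notMem_tsupport hwn
    have hdist : dist (f z) (f w) ≤ dist z w := by
      simpa using hfl.dist_le_mul z w
    rw [hfw, Real.dist_eq, sub_zero] at hdist
    have habs : f z ≤ dist z w := (le_abs_self _).trans hdist
    have : dist z w = t := by
      rw [hw, dist_eq_norm]
      have hzw : z - (z + t • u) = -(t • u) := by abel
      rw [hzw, norm_neg, norm_smul, hnu, mul_one, Real.norm_eq_abs, abs_of_pos htpos]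
    rw [this, ht] at habs
    linarith

lemma lint_le_Fb {s : ℝ} (hn : 0 < n) {f : Euc n → ℝ}
    (hf : f ∈ TS (closedBall (0 : Euc n) s)) (α : Measure (Euc n)) :
    ∫⁻ z, ENNReal.ofReal (f z) ∂α ≤ Fb s α :=
  lintegral_mono fun z => test_le hn hf z

lemma edd_mul_left_le (c a b : ℝ≥0∞) : edd (c * a) (c * b) ≤ c * edd a b := by
  refine sup_le ?_ ?_
  · refine tsub_le_iff_right.mpr ?_
    calc c * a ≤ c * ((a - b) + b) := mul_le_mul_right le_tsub_add c
    _ = c * (a - b) + c * b := by rw [mul_add]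
    _ ≤ c * edd a b + c * b := add_le_add_left (mul_le_mul_right le_sup_left c) _
  · refine tsub_le_iff_right.mpr ?_
    calc c * b ≤ c * ((b - a) + a) := mul_le_mul_right le_tsub_add c
    _ = c * (b - a) + c * a := by rw [mul_add]
    _ ≤ c * edd a b + c * a := add_le_add_left (mul_le_mul_right le_sup_right c) _

lemma edd_mul_right_le (a b x : ℝ≥0∞) : edd (a * x) (b * x) ≤ edd a b * x := by
  rw [mul_comm a x, mul_comm b x, mul_comm (edd a b) x]
  exact edd_mul_left_le x a b

set_option maxHeartbeats 1000000 in
lemma Fbd_smul_le (s : ℝ) (c : ℝ≥0∞) (α β : Measure (Euc n)) :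
    Fbd s (c • α) (c • β) ≤ c * Fbd s α β := by
  rw [Fbd, FKd_eq]
  refine iSup₂_le fun f hf => ?_
  rw [lintegral_smul_measure, lintegral_smul_measure]
  refine (edd_mul_left_le c _ _).trans (mul_le_mul_right ?_ c)
  rw [Fbd, FKd_eq]
  exact le_iSup₂ (f := fun (f : Euc n → ℝ) (_ : f ∈ TS (closedBall (0:Euc n) s)) =>
    edd (∫⁻ z, ENNReal.ofReal (f z) ∂α) (∫⁻ z, ENNReal.ofReal (f z) ∂β)) f hf

lemma Fbd_smul_smul_le {s : ℝ} (hn : 0 < n) (a b : ℝ≥0∞) (α : Measure (Euc n)) :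
    Fbd s (a • α) (b • α) ≤ edd a b * Fb s α := by
  rw [Fbd, FKd_eq]
  refine iSup₂_le fun f hf => ?_
  rw [lintegral_smul_measure, lintegral_smul_measure]
  exact (edd_mul_right_le a b _).trans (mul_le_mul_right (lint_le_Fb hn hf α) _)

lemma iInf_edd_le (s : ℝ) (S : Set (Measure (Euc n))) (α β : Measure (Euc n)) :
    edd (⨅ Ψ ∈ S, Fbd s α Ψ) (⨅ Ψ ∈ S, Fbd s β Ψ) ≤ Fbd s α β := by
  have key : ∀ γ δ : Measure (Euc n), (⨅ Ψ ∈ S, Fbd s γ Ψ) ≤ (⨅ Ψ ∈ S, Fbd s δ Ψ) + Fbd s γ δ := by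
    intro γ δ
    refine tsub_le_iff_right.mp (le_iInf₂ fun Ψ hΨ => tsub_le_iff_right.mpr ?_)
    exact (iInf₂_le (f := fun (Ψ : Measure (Euc n)) (_ : Ψ ∈ S) => Fbd s γ Ψ) Ψ hΨ).trans
      ((Fbd_triangle s γ δ Ψ).trans (add_comm _ _).le)
  refine sup_le (tsub_le_iff_left.mpr ?_) (tsub_le_iff_left.mpr ?_)
  · exact key α β
  · exact (key β α).trans_eq (by rw [Fbd_comm s β α])

lemma tendsto_of_edd {x : ℕ → ℝ≥0∞} {a : ℝ≥0∞}
    (h : Tendsto (fun i => edd (x i) a) atTop (𝓝 0)) : Tendsto x atTop (𝓝 a) := by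
  rcases eq_or_ne a ⊤ with rfl | ha
  · have hev : ∀ᶠ i in atTop, x i = ⊤ := by
      filter_upwards [ENNReal.tendsto_nhds_zero.mp h 1 one_pos] with i hi
      by_contra hx
      have h1 : (⊤ : ℝ≥0∞) - x i = ⊤ := ENNReal.sub_eq_top_iff.2 ⟨rfl, hx⟩
      have h2 : edd (x i) ⊤ = ⊤ := by simp [edd, h1]
      rw [h2] at hi
      exact absurd hi (by simp)
    exact Tendsto.congr' (hev.mono fun i h => h.symm) tendsto_const_nhds
  · rw [ENNReal.tendsto_nhds ha]
    intro ε hε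
    filter_upwards [ENNReal.tendsto_nhds_zero.mp h ε hε] with i hi
    have h1 : x i - a ≤ ε := le_sup_left.trans hi
    have h2 : a - x i ≤ ε := le_sup_right.trans hi
    exact ⟨tsub_le_iff_right.mpr (tsub_le_iff_left.mp h2),
      tsub_le_iff_right.mp h1 |>.trans (by rw [add_comm])⟩

lemma edd_tendsto_zero {x : ℕ → ℝ≥0∞} {a : ℝ≥0∞} (ha : a ≠ ⊤)
    (h : Tendsto x atTop (𝓝 a)) : Tendsto (fun i => edd (x i) a) atTop (𝓝 0) := by
  rw [ENNReal.tendsto_nhds_zero]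
  intro ε hε
  filter_upwards [(ENNReal.tendsto_nhds ha).mp h ε hε] with i hi
  refine sup_le (tsub_le_iff_right.mpr (hi.2.trans (by rw [add_comm]))) ?_
  exact tsub_le_iff_right.mpr (tsub_le_iff_left.mp hi.1)

end KPTAux

open KPT in
/-- If `μ_i → μ` (Radon measures on `ℝⁿ`), `M` is a `d`-cone and `F_s(μ) > 0`, then
`lim_i d_s(μ_i, M)` exists and equals `d_s(μ, M)`. -/
theorem stmt0 {n : ℕ} (M : Set (Measure (Euc n))) (hM : IsDCone M)
    (μi : ℕ → Measure (Euc n)) (μ : Measure (Euc n))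
    (hRi : ∀ i, IsLocallyFiniteMeasure (μi i)) (hR : IsLocallyFiniteMeasure μ)
    (hconv : MConv μi μ) (s : ℝ) (hs : 0 < s) (hFs : 0 < Fb s μ) :
    Filter.Tendsto (fun i => dDist s (μi i) M) Filter.atTop (nhds (dDist s μ M)) := by
  classical
  have hFlt : Fb s μ < ⊤ := KPTAux.Fb_lt_top s μ hR
  obtain ⟨-, htend⟩ := hconv (closedBall (0 : Euc n) s) (isCompact_closedBall _ _)
  have htend' : Tendsto (fun i => Fbd s (μi i) μ) atTop (𝓝 0) := htend
  have hFbt : Tendsto (fun i => Fb s (μi i)) atTop (𝓝 (Fb s μ)) := by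
    refine KPTAux.tendsto_of_edd ?_
    refine tendsto_of_tendsto_of_tendsto_of_le_of_le' tendsto_const_nhds htend'
      (Filter.Eventually.of_forall fun i => zero_le)
      (Filter.Eventually.of_forall fun i => KPTAux.edd_Fb_le s (μi i) μ)
  have hF2 : (0 : ℝ≥0∞) < Fb s μ / 2 := ENNReal.half_pos hFs.ne'
  have hev : ∀ᶠ i in atTop,
      Fb s μ / 2 ≤ Fb s (μi i) ∧ Fb s (μi i) ≤ Fb s μ + Fb s μ / 2 := by
    filter_upwards [(ENNReal.tendsto_nhds hFlt.ne).mp hFbt (Fb s μ / 2) hF2] with i hi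
    obtain ⟨h1, h2⟩ := hi
    rw [ENNReal.sub_half hFlt.ne] at h1
    exact ⟨h1, h2⟩
  have hhalf_top : Fb s μ + Fb s μ / 2 < ⊤ :=
    ENNReal.add_lt_top.2 ⟨hFlt, lt_of_le_of_lt ENNReal.half_le_self hFlt⟩
  have hνtend : Tendsto (fun i => Fbd s ((Fb s (μi i))⁻¹ • μi i) ((Fb s μ)⁻¹ • μ))
      atTop (𝓝 0) := by
    rcases Nat.eq_zero_or_pos n with hn | hn
    · -- dimension 0 : the normalized measures have equal total mass, so the distance is 0
      subst hn
      refine Tendsto.congr' ?_ tendsto_const_nhds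
      filter_upwards [hev] with i hi
      symm
      have hmass : ∀ α : Measure (Euc 0), Fb s α = ENNReal.ofReal s * α univ := by
        intro α
        rw [Fb]
        have h : (fun z : Euc 0 => ENNReal.ofReal (s - ‖z‖)) =
            fun _ => ENNReal.ofReal s := by
          funext z
          rw [Subsingleton.elim z 0, norm_zero, sub_zero]
        rw [h, lintegral_const]
      have hsne : ENNReal.ofReal s ≠ 0 := (ENNReal.ofReal_pos.2 hs).ne'
      have hsnt : ENNReal.ofReal s ≠ ⊤ := ENNReal.ofReal_ne_top
      have key : ∀ α : Measure (Euc 0), Fb s μ / 2 ≤ Fb s α →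
          Fb s α ≤ Fb s μ + Fb s μ / 2 →
          (Fb s α)⁻¹ * α univ = (ENNReal.ofReal s)⁻¹ := by
        intro α h1 h2
        have h0 : α univ ≠ 0 := by
          intro h
          rw [hmass α, h, mul_zero] at h1
          exact hF2.ne' (le_antisymm h1 (zero_le))
        have ht : α univ ≠ ⊤ := by
          intro h
          rw [hmass α, h, ENNReal.mul_top hsne] at h2
          exact hhalf_top.ne (le_antisymm le_top h2)
        rw [hmass α, ENNReal.mul_inv (Or.inl hsne) (Or.inl hsnt), mul_assoc,
          ENNReal.inv_mul_cancel h0 ht, mul_one]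
      refine le_antisymm ?_ (zero_le)
      rw [Fbd, KPTAux.FKd_eq]
      refine iSup₂_le fun f hf => ?_
      have hI : ∀ α : Measure (Euc 0),
          ∫⁻ z, ENNReal.ofReal (f z) ∂α = ENNReal.ofReal (f 0) * α univ := by
        intro α
        have h : (fun z : Euc 0 => ENNReal.ofReal (f z)) =
            fun _ => ENNReal.ofReal (f 0) := by
          funext z
          rw [Subsingleton.elim z 0]
        rw [h, lintegral_const]
      rw [hI, hI]
      simp only [Measure.smul_apply, smul_eq_mul]
      rw [key (μi i) hi.1 hi.2, key μ ENNReal.half_le_self le_self_add]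
      exact le_of_eq (KPTAux.edd_self _)
    · -- dimension ≥ 1
      have hcinv : Tendsto (fun i => (Fb s (μi i))⁻¹) atTop (𝓝 (Fb s μ)⁻¹) :=
        ENNReal.tendsto_inv_iff.2 hFbt
      have hct : (Fb s μ)⁻¹ ≠ ⊤ := ENNReal.inv_ne_top.2 hFs.ne'
      have hedd : Tendsto (fun i => edd ((Fb s (μi i))⁻¹) ((Fb s μ)⁻¹)) atTop (𝓝 0) :=
        KPTAux.edd_tendsto_zero hct hcinv
      have hub : ∀ᶠ i in atTop,
          Fbd s ((Fb s (μi i))⁻¹ • μi i) ((Fb s μ)⁻¹ • μ) ≤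
            (Fb s μ / 2)⁻¹ * Fbd s (μi i) μ +
              edd ((Fb s (μi i))⁻¹) ((Fb s μ)⁻¹) * Fb s μ := by
        filter_upwards [hev] with i hi
        calc Fbd s ((Fb s (μi i))⁻¹ • μi i) ((Fb s μ)⁻¹ • μ)
            ≤ Fbd s ((Fb s (μi i))⁻¹ • μi i) ((Fb s (μi i))⁻¹ • μ) +
              Fbd s ((Fb s (μi i))⁻¹ • μ) ((Fb s μ)⁻¹ • μ) :=
              KPTAux.Fbd_triangle s _ _ _
          _ ≤ (Fb s (μi i))⁻¹ * Fbd s (μi i) μ +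
              edd ((Fb s (μi i))⁻¹) ((Fb s μ)⁻¹) * Fb s μ :=
              add_le_add (KPTAux.Fbd_smul_le s _ _ _) (KPTAux.Fbd_smul_smul_le hn _ _ μ)
          _ ≤ _ :=
              add_le_add_left (mul_le_mul_left (ENNReal.inv_le_inv.2 hi.1) _) _
      have h1 : Tendsto (fun i => (Fb s μ / 2)⁻¹ * Fbd s (μi i) μ) atTop
          (𝓝 ((Fb s μ / 2)⁻¹ * 0)) :=
        ENNReal.Tendsto.const_mul htend' (Or.inr (ENNReal.inv_ne_top.2 hF2.ne'))
      have h2 : Tendsto (fun i => edd ((Fb s (μi i))⁻¹) ((Fb s μ)⁻¹) * Fb s μ) atTop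
          (𝓝 (0 * Fb s μ)) :=
        ENNReal.Tendsto.mul_const hedd (Or.inr hFlt.ne)
      have hrhs := h1.add h2
      rw [mul_zero, zero_mul, add_zero] at hrhs
      exact tendsto_of_tendsto_of_tendsto_of_le_of_le' tendsto_const_nhds hrhs
        (Filter.Eventually.of_forall fun i => zero_le) hub
  have hcond : dDist s μ M =
      ⨅ Ψ ∈ {Ψ ∈ M | Fb s Ψ = 1}, Fbd s ((Fb s μ)⁻¹ • μ) Ψ := by
    unfold KPT.dDist
    exact if_pos ⟨hFs, hFlt⟩
  have hfin : Tendsto (fun i => edd (dDist s (μi i) M) (dDist s μ M)) atTop (𝓝 0) := by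
    refine tendsto_of_tendsto_of_tendsto_of_le_of_le' tendsto_const_nhds hνtend
      (Filter.Eventually.of_forall fun i => zero_le) ?_
    filter_upwards [hev] with i hi
    have hpos : 0 < Fb s (μi i) := lt_of_lt_of_le hF2 hi.1
    have hlt : Fb s (μi i) < ⊤ := lt_of_le_of_lt hi.2 hhalf_top
    have hcond' : dDist s (μi i) M =
        ⨅ Ψ ∈ {Ψ ∈ M | Fb s Ψ = 1}, Fbd s ((Fb s (μi i))⁻¹ • μi i) Ψ := by
      unfold KPT.dDist
      exact if_pos ⟨hpos, hlt⟩
    rw [hcond, hcond']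
    exact KPTAux.iInf_edd_le s _ _ _
  exact KPTAux.tendsto_of_edd hfin
end
end

section
/- Let Σ ⊂ ℝ^n be a set such that for every Q ∈ Σ, lim_{r→0} β_Σ(Q,r) = 0, where β_Σ(Q,r) = inf_L sup_{y ∈ Σ ∩ B(Q,r)} dist(y, L)/r, the infimum being taken over all (n−1)-dimensional affine planes L in ℝ^n. Then the Hausdorff dimension of Σ is at most n−1. -/
open MeasureTheory Metric Filter Set Topology
open scoped ENNReal NNReal Classical

noncomputable section

namespace KPTAux

open KPT Module

variable {n : ℕ}

lemma abs_coord_le {m : ℕ} (v : EuclideanSpace ℝ (Fin m)) (i : Fin m) : |v i| ≤ ‖v‖ := by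
  rw [EuclideanSpace.norm_eq]
  have h1 : |v i| = Real.sqrt (‖v i‖ ^ 2) := by
    rw [Real.sqrt_sq_eq_abs]; simp
  rw [h1]
  apply Real.sqrt_le_sqrt
  exact Finset.single_le_sum (f := fun j => ‖v j‖ ^ 2) (fun j _ => sq_nonneg _) (Finset.mem_univ i)

def gridN (n : ℕ) (ε : ℝ) : ℕ := (2 * (⌈4 * (n:ℝ) / ε⌉₊ + 1) + 1) ^ (n - 1)

set_option maxHeartbeats 1000000 in
lemma cover_slab (hn : 1 ≤ n) {ε ρ : ℝ} (hε : 0 < ε) (hε1 : ε ≤ 1) (hρ : 0 < ρ)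
    (a x : Euc n) (W : Submodule ℝ (Euc n)) (hW : finrank ℝ W = n - 1) :
    ∃ F : Finset (Euc n), F.card ≤ gridN n ε ∧
      ∀ y ∈ ball a ρ, infDist y {z : Euc n | z - x ∈ W} < ε * ρ →
        ∃ z ∈ F, dist y z < 2 * (ε * ρ) := by
  set L : Set (Euc n) := {z : Euc n | z - x ∈ W} with hLdef
  have hLne : L.Nonempty := ⟨x, by simp [hLdef]⟩
  rcases ({y ∈ ball a ρ | infDist y L < ε * ρ} : Set (Euc n)).eq_empty_or_nonempty with hT | hT
  · refine ⟨∅, by simp, fun y hy1 hy2 => ?_⟩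
    exact absurd (by exact ⟨hy1, hy2⟩ : y ∈ {y ∈ ball a ρ | infDist y L < ε * ρ}) (by rw [hT]; simp)
  obtain ⟨y0, hy0b, hy0d⟩ := hT
  obtain ⟨p0, hp0L, hp0⟩ := (infDist_lt_iff hLne).1 hy0d
  set m' := finrank ℝ W with hm'
  set b := stdOrthonormalBasis ℝ W with hb
  set δ : ℝ := ε * ρ / n with hδdef
  have hn0 : (0:ℝ) < n := by exact_mod_cast hn
  have hδ : 0 < δ := by positivity
  set K' : ℕ := ⌈4 * (n:ℝ) / ε⌉₊ + 1 with hK'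
  set G : Finset (Euc n) :=
    (Fintype.piFinset (fun _ : Fin m' => Finset.Icc (-(K':ℤ)) (K':ℤ))).image
      (fun k => p0 + (b.repr.symm (WithLp.toLp 2 (fun i => (k i : ℝ) * δ)) : W)) with hG
  have hcard : G.card ≤ gridN n ε := by
    refine Finset.card_image_le.trans ?_
    rw [Fintype.card_piFinset]
    simp only [Int.card_Icc]
    rw [gridN]
    have h2 : ((K':ℤ) + 1 - -(K':ℤ)).toNat = 2 * K' + 1 := by omega
    rw [Finset.prod_const, h2, Finset.card_univ, Fintype.card_fin, hW, hK']
  refine ⟨G, hcard, fun y hyb hyd => ?_⟩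
  obtain ⟨p, hpL, hp⟩ := (infDist_lt_iff hLne).1 hyd
  have hwmem : p - p0 ∈ W := by
    have := W.sub_mem hpL hp0L
    simpa using this
  set w : W := ⟨p - p0, hwmem⟩ with hwdef
  have hwcoe : ((w : Euc n)) = p - p0 := rfl
  have hw4 : ‖w‖ ≤ 4 * ρ := by
    have h0 : ‖(w : Euc n)‖ = dist p p0 := by rw [hwcoe, dist_eq_norm]
    rw [show ‖w‖ = ‖(w : Euc n)‖ from rfl, h0]
    have h1 : dist p p0 ≤ dist p y + dist y a + dist a y0 + dist y0 p0 := by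
      have := dist_triangle4 p y a p0
      have h2 := dist_triangle a y0 p0
      linarith
    have hya : dist y a < ρ := mem_ball.1 hyb
    have hy0a : dist y0 a < ρ := mem_ball.1 hy0b
    rw [dist_comm p y] at h1
    rw [dist_comm a y0] at h1
    nlinarith [dist_nonneg (x := p) (y := y0)]
  set c : EuclideanSpace ℝ (Fin m') := b.repr w with hc
  have hci : ∀ i, |c i| ≤ 4 * ρ := by
    intro i
    refine (abs_coord_le c i).trans ?_
    rw [hc, b.repr.norm_map w]
    exact hw4
  set k : Fin m' → ℤ := fun i => round (c i / δ) with hk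
  have hkr : ∀ i, (k i : ℝ) = (round (c i / δ) : ℝ) := fun i => rfl
  have habs : ∀ i, |(k i : ℝ)| ≤ (K' : ℝ) := by
    intro i
    have h1 : |c i / δ| ≤ 4 * n / ε := by
      rw [abs_div, abs_of_pos hδ, div_le_div_iff₀ hδ hε]
      have := hci i
      calc |c i| * ε ≤ (4 * ρ) * ε := mul_le_mul_of_nonneg_right this hε.le
        _ = 4 * n * δ := by rw [hδdef]; field_simp
    have h2 : |(k i : ℝ) - c i / δ| ≤ 1 / 2 := by
      rw [hkr, abs_sub_comm]; exact abs_sub_round _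
    have h3 : |(k i : ℝ)| ≤ |c i / δ| + 1 / 2 := by
      have h := abs_add_le (c i / δ) ((k i : ℝ) - c i / δ)
      have key : c i / δ + ((k i : ℝ) - c i / δ) = (k i : ℝ) := by ring
      rw [key] at h
      linarith
    have h5 : 4 * (n:ℝ) / ε ≤ (⌈4 * (n:ℝ) / ε⌉₊ : ℝ) := Nat.le_ceil _
    have h6 : (K' : ℝ) = (⌈4 * (n:ℝ) / ε⌉₊ : ℝ) + 1 := by rw [hK']; push_cast; ring
    rw [h6]
    linarith
  have hkmem : ∀ i, k i ∈ Finset.Icc (-(K':ℤ)) (K':ℤ) := by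
    intro i
    rw [Finset.mem_Icc, ← abs_le]
    exact_mod_cast habs i
  set v : EuclideanSpace ℝ (Fin m') := WithLp.toLp 2 (fun i => (k i : ℝ) * δ) with hv
  refine ⟨p0 + (b.repr.symm v : W), Finset.mem_image.2 ⟨k, Fintype.mem_piFinset.2 hkmem, rfl⟩, ?_⟩
  have hdistpz : dist p (p0 + (b.repr.symm v : W)) ≤ ε * ρ / 2 := by
    have he1 : p - (p0 + (b.repr.symm v : W)) = ((w - b.repr.symm v : W) : Euc n) := by
      rw [Submodule.coe_sub, hwcoe]
      abel
    have he2 : dist p (p0 + (b.repr.symm v : W)) = ‖(w - b.repr.symm v : W)‖ := by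
      rw [dist_eq_norm, he1]
      rfl
    rw [he2, ← b.repr.norm_map (w - b.repr.symm v)]
    have he3 : b.repr (w - b.repr.symm v) = c - v := by
      rw [map_sub, b.repr.apply_symm_apply, hc]
    rw [he3]
    set u : EuclideanSpace ℝ (Fin m') := c - v with hu
    have hui : ∀ i, u i = c i - (k i : ℝ) * δ := by
      intro i; rw [hu]; rfl
    have hcoord : ∀ i, ‖u i‖ ^ 2 ≤ (δ / 2) ^ 2 := by
      intro i
      have h2 : c i - (k i : ℝ) * δ = δ * (c i / δ - (round (c i / δ) : ℝ)) := by
        rw [hkr]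
        field_simp
      have h3 : ‖u i‖ ≤ δ / 2 := by
        rw [hui, h2, norm_mul, Real.norm_of_nonneg hδ.le]
        have h4 := abs_sub_round (c i / δ)
        calc δ * ‖c i / δ - (round (c i / δ) : ℝ)‖ ≤ δ * (1/2) :=
              mul_le_mul_of_nonneg_left h4 hδ.le
          _ = δ / 2 := by ring
      have h4 : (0:ℝ) ≤ ‖u i‖ := norm_nonneg _
      nlinarith
    have hnormu : ‖u‖ ≤ (n : ℝ) * (δ / 2) := by
      rw [EuclideanSpace.norm_eq]
      have hsum : ∑ i, ‖u i‖ ^ 2 ≤ (m' : ℝ) * (δ / 2) ^ 2 := by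
        calc ∑ i, ‖u i‖ ^ 2 ≤ ∑ _i : Fin m', (δ / 2) ^ 2 :=
              Finset.sum_le_sum (fun i _ => hcoord i)
          _ = (m' : ℝ) * (δ / 2) ^ 2 := by
              rw [Finset.sum_const, Finset.card_univ, Fintype.card_fin]
              simp [nsmul_eq_mul]
      have hm'n : (m' : ℝ) ≤ (n : ℝ) ^ 2 := by
        have hle : m' ≤ n := by omega
        have h1 : (m' : ℝ) ≤ (n : ℝ) := by exact_mod_cast hle
        have h2 : (1:ℝ) ≤ (n : ℝ) := by exact_mod_cast hn
        nlinarith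
      have hfinal : ∑ i, ‖u i‖ ^ 2 ≤ ((n : ℝ) * (δ / 2)) ^ 2 := by
        calc ∑ i, ‖u i‖ ^ 2 ≤ (m' : ℝ) * (δ / 2) ^ 2 := hsum
          _ ≤ (n : ℝ) ^ 2 * (δ / 2) ^ 2 := by nlinarith [sq_nonneg (δ/2)]
          _ = ((n : ℝ) * (δ / 2)) ^ 2 := by ring
      calc Real.sqrt (∑ i, ‖u i‖ ^ 2) ≤ Real.sqrt (((n : ℝ) * (δ / 2)) ^ 2) :=
            Real.sqrt_le_sqrt hfinal
        _ = (n : ℝ) * (δ / 2) := Real.sqrt_sq (by positivity)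
    calc ‖u‖ ≤ (n : ℝ) * (δ / 2) := hnormu
      _ = ε * ρ / 2 := by rw [hδdef]; field_simp
  have htri := dist_triangle y p (p0 + (b.repr.symm v : W))
  have : dist y (p0 + (b.repr.symm v : W)) < ε * ρ + ε * ρ / 2 := by linarith
  nlinarith [mul_pos hε hρ]


lemma exists_hyperplane (hn : 1 ≤ n) :
    ∃ W : Submodule ℝ (Euc n), finrank ℝ W = n - 1 := by
  set e : Euc n := EuclideanSpace.single (⟨0, hn⟩ : Fin n) (1:ℝ) with he
  have hne : e ≠ 0 := by
    intro h
    have : ‖e‖ = 1 := by rw [he, EuclideanSpace.norm_single]; norm_num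
    rw [h] at this; simp at this
  refine ⟨(Submodule.span ℝ {e})ᗮ, ?_⟩
  have h1 : finrank ℝ (Submodule.span ℝ {e}) = 1 := finrank_span_singleton hne
  have h2 := Submodule.finrank_add_finrank_orthogonal (𝕜 := ℝ) (Submodule.span ℝ {e})
  have h3 : finrank ℝ (Euc n) = n := finrank_euclideanSpace_fin
  omega

lemma slab_of_beta (hn : 1 ≤ n) {S : Set (Euc n)} {Q : Euc n} {r ε : ℝ}
    (hr : 0 < r) (hβ : betaSet S Q r < ε) :
    ∃ (x : Euc n) (W : Submodule ℝ (Euc n)), finrank ℝ W = n - 1 ∧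
      ∀ y ∈ S ∩ ball Q r, infDist y {z : Euc n | z - x ∈ W} < ε * r := by
  obtain ⟨W0, hW0⟩ := exists_hyperplane (n := n) hn
  haveI : Nonempty {L : Set (Euc n) | ∃ (x : Euc n) (W : Submodule ℝ (Euc n)),
      Module.finrank ℝ W = n - 1 ∧ L = {y | y - x ∈ W}} :=
    ⟨⟨{y | y - 0 ∈ W0}, 0, W0, hW0, rfl⟩⟩
  obtain ⟨L, hL⟩ := exists_lt_of_ciInf_lt hβ
  obtain ⟨x, W, hW, hLeq⟩ := L.2
  refine ⟨x, W, hW, fun y hy => ?_⟩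
  have hb : BddAbove (range fun y : (S ∩ ball Q r : Set (Euc n)) =>
      infDist (y : Euc n) (L : Set (Euc n)) / r) := by
    refine ⟨(r + dist Q x) / r, ?_⟩
    rintro _ ⟨z, rfl⟩
    have hxL : x ∈ (L : Set (Euc n)) := by rw [hLeq]; simp
    have h1 : infDist (z : Euc n) (L : Set (Euc n)) ≤ dist (z : Euc n) x :=
      infDist_le_dist_of_mem hxL
    have h2 : dist (z : Euc n) x ≤ dist (z : Euc n) Q + dist Q x := dist_triangle _ _ _
    have h3 : dist (z : Euc n) Q ≤ r := le_of_lt (mem_ball.1 z.2.2)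
    exact div_le_div_of_nonneg_right (by linarith) hr.le
  have := le_ciSup hb (⟨y, hy⟩ : (S ∩ ball Q r : Set (Euc n)))
  have h4 : infDist y (L : Set (Euc n)) / r < ε := lt_of_le_of_lt this hL
  rw [← hLeq]
  rw [div_lt_iff₀ hr] at h4
  linarith


lemma step' (hn : 1 ≤ n) {S G : Set (Euc n)} (hGS : G ⊆ S) {ε ρ : ℝ} (hε : 0 < ε)
    (hε1 : ε ≤ 1) (hρ : 0 < ρ) {a : Euc n} (ha : a ∈ G) (hβ : betaSet S a ρ < ε) :
    ∃ F : Finset (Euc n), F.card ≤ gridN n ε ∧ (∀ z ∈ F, z ∈ G) ∧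
      G ∩ ball a ρ ⊆ ⋃ z ∈ F, ball z (4 * (ε * ρ)) := by
  obtain ⟨x, W, hW, hslab⟩ := slab_of_beta hn hρ hβ
  obtain ⟨F0, hF0c, hF0⟩ := cover_slab hn hε hε1 hρ a x W hW
  classical
  set pick : Euc n → Euc n := fun z =>
    if h : (G ∩ ball z (2 * (ε * ρ))).Nonempty then h.some else a with hpick
  have hpickG : ∀ z, pick z ∈ G := by
    intro z
    rw [hpick]
    by_cases h : (G ∩ ball z (2 * (ε * ρ))).Nonempty
    · simp only [h, dif_pos]; exact h.some_mem.1
    · simp only [h, dif_neg, not_false_iff]; exact ha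
  refine ⟨F0.image pick, Finset.card_image_le.trans hF0c, ?_, ?_⟩
  · intro z hz
    obtain ⟨z0, _, rfl⟩ := Finset.mem_image.1 hz
    exact hpickG z0
  · rintro y ⟨hyG, hyb⟩
    have hyS : y ∈ S ∩ ball a ρ := ⟨hGS hyG, hyb⟩
    obtain ⟨z0, hz0F, hdz⟩ := hF0 y hyb (hslab y hyS)
    have hne : (G ∩ ball z0 (2 * (ε * ρ))).Nonempty := ⟨y, hyG, mem_ball.2 hdz⟩
    have hps : pick z0 = hne.some := by rw [hpick]; simp only [hne, dif_pos]
    refine mem_biUnion (Finset.mem_image_of_mem pick hz0F) ?_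
    rw [mem_ball, hps]
    have h1 : dist hne.some z0 < 2 * (ε * ρ) := mem_ball.1 hne.some_mem.2
    calc dist y hne.some ≤ dist y z0 + dist z0 hne.some := dist_triangle _ _ _
      _ = dist y z0 + dist hne.some z0 := by rw [dist_comm z0 hne.some]
      _ < 2 * (ε * ρ) + 2 * (ε * ρ) := by linarith
      _ = 4 * (ε * ρ) := by ring

lemma iterate (hn : 1 ≤ n) {S G : Set (Euc n)} (hGS : G ⊆ S) {ε τ : ℝ} (hε : 0 < ε)
    (hε4 : 4 * ε ≤ 1) (hτ : 0 < τ)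
    (hβ : ∀ Q ∈ G, ∀ r : ℝ, 0 < r → r ≤ τ → betaSet S Q r < ε)
    {a : Euc n} (ha : a ∈ G) (j : ℕ) :
    ∃ F : Finset (Euc n), F.card ≤ (gridN n ε) ^ j ∧ (∀ z ∈ F, z ∈ G) ∧
      G ∩ ball a τ ⊆ ⋃ z ∈ F, ball z ((4 * ε) ^ j * τ) := by
  induction j with
  | zero =>
    refine ⟨{a}, by simp, by simp [ha], ?_⟩
    intro y hy
    simp only [pow_zero, one_mul]
    exact mem_biUnion (Finset.mem_singleton_self a) hy.2
  | succ j ih =>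
    obtain ⟨F, hFc, hFG, hFcov⟩ := ih
    have hε0 : 0 ≤ 4 * ε := by linarith
    have hρ : 0 < (4 * ε) ^ j * τ := by positivity
    have hρτ : (4 * ε) ^ j * τ ≤ τ := by
      have h1 : (4 * ε) ^ j ≤ 1 := pow_le_one₀ hε0 hε4
      nlinarith
    have key : ∀ z ∈ G, ∃ Fz : Finset (Euc n), Fz.card ≤ gridN n ε ∧ (∀ z' ∈ Fz, z' ∈ G) ∧
        G ∩ ball z ((4 * ε) ^ j * τ) ⊆ ⋃ z' ∈ Fz, ball z' (4 * (ε * ((4 * ε) ^ j * τ))) :=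
      fun z hz => step' hn hGS hε (by linarith) hρ hz (hβ z hz _ hρ hρτ)
    classical
    choose! Fz hFzc hFzG hFzcov using key
    refine ⟨F.biUnion Fz, ?_, ?_, ?_⟩
    · refine (Finset.card_biUnion_le).trans ?_
      calc ∑ z ∈ F, (Fz z).card ≤ ∑ _z ∈ F, gridN n ε :=
            Finset.sum_le_sum (fun z hz => hFzc z (hFG z hz))
        _ = F.card * gridN n ε := by rw [Finset.sum_const, smul_eq_mul]
        _ ≤ (gridN n ε) ^ j * gridN n ε := Nat.mul_le_mul_right _ hFc
        _ = (gridN n ε) ^ (j + 1) := by rw [pow_succ]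
    · intro z' hz'
      obtain ⟨z, hz, hz'2⟩ := Finset.mem_biUnion.1 hz'
      exact hFzG z (hFG z hz) z' hz'2
    · intro y hy
      have h1 := hFcov hy
      rw [mem_iUnion₂] at h1
      obtain ⟨z, hz, hball⟩ := h1
      have h2 := hFzcov z (hFG z hz) ⟨hy.1, hball⟩
      rw [mem_iUnion₂] at h2
      obtain ⟨z', hz', hball'⟩ := h2
      rw [mem_iUnion₂]
      refine ⟨z', Finset.mem_biUnion.2 ⟨z, hz, hz'⟩, ?_⟩
      have heq : (4 * ε) ^ (j + 1) * τ = 4 * (ε * ((4 * ε) ^ j * τ)) := by ring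
      rw [heq]
      exact hball'

lemma piece_null (hn : 1 ≤ n) {d : ℝ} (hd0 : 0 < d) {S G : Set (Euc n)} (hGS : G ⊆ S)
    {ε τ : ℝ} (hε : 0 < ε) (hε4 : 4 * ε < 1) (hτ : 0 < τ)
    (hθ : (gridN n ε : ℝ≥0∞) * (ENNReal.ofReal (4 * ε)) ^ d < 1)
    (hβ : ∀ Q ∈ G, ∀ r : ℝ, 0 < r → r ≤ τ → betaSet S Q r < ε)
    {a : Euc n} (ha : a ∈ G) :
    μH[d] (G ∩ ball a τ) = 0 := by
  classical
  set N := gridN n ε with hN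
  have hiter := iterate hn hGS hε hε4.le hτ hβ ha
  choose F hFc hFG hFcov using hiter
  set t : ∀ _j : ℕ, ℕ → Set (Euc n) := fun j i =>
    if h : i < (F j).card then ball (((F j).equivFin.symm ⟨i, h⟩ : (F j : Set (Euc n)))
      : Euc n) ((4*ε)^j * τ) else ∅ with ht_def
  set r : ℕ → ℝ≥0∞ := fun j => ENNReal.ofReal (2 * ((4*ε)^j * τ)) with hr_def
  have hε40 : (0:ℝ) ≤ 4 * ε := by linarith
  have hr : Tendsto r atTop (𝓝 0) := by
    have h1 : Tendsto (fun j : ℕ => (4*ε)^j * (2*τ)) atTop (𝓝 0) := by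
      have := tendsto_pow_atTop_nhds_zero_of_lt_one hε40 hε4
      simpa using this.mul_const (2*τ)
    have h2 : Tendsto (fun j : ℕ => ENNReal.ofReal ((4*ε)^j * (2*τ))) atTop (𝓝 0) := by
      have h3 := ENNReal.tendsto_ofReal h1
      simpa using h3
    have hre : r = fun j => ENNReal.ofReal ((4*ε)^j * (2*τ)) := by
      funext j; rw [hr_def]; congr 1; ring
    rw [hre]
    exact h2
  have hdb : ∀ (c : Euc n) (ρ' : ℝ), EMetric.diam (ball c ρ') ≤ ENNReal.ofReal (2 * ρ') := by
    intro c ρ'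
    refine EMetric.diam_le ?_
    intro p hp q hq
    rw [edist_dist]
    refine ENNReal.ofReal_le_ofReal ?_
    have hp' := mem_ball.1 hp
    have hq' := mem_ball.1 hq
    have h3 := dist_triangle p c q
    rw [dist_comm c q] at h3
    linarith
  have ht : ∀ j i, EMetric.diam (t j i) ≤ r j := by
    intro j i
    rw [ht_def]
    by_cases h : i < (F j).card
    · simp only [h, dif_pos]
      exact hdb _ _
    · simp only [h, dif_neg, not_false_iff, EMetric.diam, Metric.ediam_empty, zero_le]
  have hst : ∀ j, G ∩ ball a τ ⊆ ⋃ i, t j i := by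
    intro j y hy
    have h1 := hFcov j hy
    rw [mem_iUnion₂] at h1
    obtain ⟨z, hz, hball⟩ := h1
    set i0 : Fin (F j).card := (F j).equivFin ⟨z, hz⟩ with hi0
    rw [mem_iUnion]
    refine ⟨(i0 : ℕ), ?_⟩
    rw [ht_def]
    simp only [i0.isLt, dif_pos]
    have : (F j).equivFin.symm ⟨(i0 : ℕ), i0.isLt⟩ = ⟨z, hz⟩ := by
      rw [show (⟨(i0 : ℕ), i0.isLt⟩ : Fin (F j).card) = i0 from rfl, hi0,
        Equiv.symm_apply_apply]
    rw [this]
    exact hball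
  have hbound := MeasureTheory.Measure.hausdorffMeasure_le_liminf_tsum d (G ∩ ball a τ) r hr t
    (Eventually.of_forall ht) (Eventually.of_forall hst)
  set θ : ℝ≥0∞ := (N : ℝ≥0∞) * (ENNReal.ofReal (4 * ε)) ^ d with hθ_def
  set C : ℝ≥0∞ := (ENNReal.ofReal (2 * τ)) ^ d with hC_def
  have hsum : ∀ j, ∑' i, EMetric.diam (t j i) ^ d ≤ C * θ ^ j := by
    intro j
    have hterm : ∀ i, EMetric.diam (t j i) ^ d ≤
        (if i < (F j).card then (r j) ^ d else 0) := by
      intro i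
      by_cases h : i < (F j).card
      · simp only [h, if_pos]
        exact ENNReal.rpow_le_rpow (ht j i) hd0.le
      · simp only [h, if_neg, not_false_iff]
        rw [ht_def]
        simp only [h, dif_neg, not_false_iff, EMetric.diam, Metric.ediam_empty]
        rw [ENNReal.zero_rpow_of_pos hd0]
    calc ∑' i, EMetric.diam (t j i) ^ d
        ≤ ∑' i, (if i < (F j).card then (r j) ^ d else 0) := ENNReal.tsum_le_tsum hterm
      _ = ∑ i ∈ Finset.range (F j).card, (r j) ^ d := by
          rw [tsum_eq_sum (s := Finset.range (F j).card)]
          · refine Finset.sum_congr rfl ?_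
            intro i hi
            rw [if_pos (Finset.mem_range.1 hi)]
          · intro i hi
            rw [if_neg (fun hc => hi (Finset.mem_range.2 hc))]
      _ = ((F j).card : ℝ≥0∞) * (r j) ^ d := by
          rw [Finset.sum_const, Finset.card_range, nsmul_eq_mul]
      _ ≤ ((N ^ j : ℕ) : ℝ≥0∞) * (r j) ^ d := by
          gcongr
          exact_mod_cast hFc j
      _ = C * θ ^ j := by
          simp only [hr_def, hθ_def, hC_def]
          have h1 : (2 * ((4*ε)^j * τ)) = (2 * τ) * (4*ε)^j := by ring
          rw [h1, ENNReal.ofReal_mul (by linarith), ENNReal.ofReal_pow hε40,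
            ENNReal.mul_rpow_of_nonneg _ _ hd0.le]
          have h2 : ((ENNReal.ofReal (4*ε)) ^ j) ^ d = ((ENNReal.ofReal (4*ε)) ^ d) ^ j := by
            rw [← ENNReal.rpow_natCast (ENNReal.ofReal (4*ε)) j, ← ENNReal.rpow_mul,
              mul_comm (j:ℝ) d, ENNReal.rpow_mul, ENNReal.rpow_natCast]
          rw [h2, Nat.cast_pow, mul_pow]
          ring
  have hCfin : C ≠ ⊤ := by
    rw [hC_def]
    exact ENNReal.rpow_ne_top_of_nonneg hd0.le ENNReal.ofReal_ne_top
  have htend : Tendsto (fun j => C * θ ^ j) atTop (𝓝 0) := by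
    have h1 : Tendsto (fun j => θ ^ j) atTop (𝓝 0) :=
      ENNReal.tendsto_pow_atTop_nhds_zero_of_lt_one hθ
    have := ENNReal.Tendsto.const_mul h1 (Or.inr hCfin)
    simpa using this
  refine le_antisymm ?_ zero_le
  calc μH[d] (G ∩ ball a τ) ≤ liminf (fun j => ∑' i, EMetric.diam (t j i) ^ d) atTop := hbound
    _ ≤ liminf (fun j => C * θ ^ j) atTop := liminf_le_liminf (Eventually.of_forall hsum)
    _ = 0 := htend.liminf_eq


lemma exists_eps (hn : 1 ≤ n) {d : ℝ} (hd : (n:ℝ) - 1 < d) :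
    ∃ ε : ℝ, 0 < ε ∧ 4 * ε < 1 ∧
      (gridN n ε : ℝ≥0∞) * (ENNReal.ofReal (4 * ε)) ^ d < 1 := by
  have hn1 : (1:ℝ) ≤ (n:ℝ) := by exact_mod_cast hn
  set e : ℝ := d - ((n:ℝ) - 1) with he_def
  have he : 0 < e := by rw [he_def]; linarith
  have hd0 : 0 < d := by nlinarith
  set B : ℝ := (13 * (n:ℝ)) ^ (n - 1) * (4:ℝ) ^ d with hB_def
  have hB : 0 < B := by
    rw [hB_def]
    have h1 : (0:ℝ) < (13 * (n:ℝ)) ^ (n - 1) := by positivity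
    have h2 : (0:ℝ) < (4:ℝ) ^ d := Real.rpow_pos_of_pos (by norm_num) d
    positivity
  set η : ℝ := (1 / (2 * B)) ^ (1 / e) with hη_def
  have hη : 0 < η := by
    rw [hη_def]
    exact Real.rpow_pos_of_pos (by positivity) _
  set ε : ℝ := min (1/8) η with hε_def
  have hε : 0 < ε := lt_min (by norm_num) hη
  have hε8 : ε ≤ 1/8 := min_le_left _ _
  have hε1 : ε ≤ 1 := by linarith
  refine ⟨ε, hε, by linarith, ?_⟩
  -- real estimate
  have hgrid : (gridN n ε : ℝ) ≤ (13 * (n:ℝ) / ε) ^ (n - 1) := by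
    rw [gridN]
    push_cast
    refine pow_le_pow_left₀ (by positivity) ?_ _
    have h1 : (⌈4 * (n:ℝ) / ε⌉₊ : ℝ) < 4 * (n:ℝ) / ε + 1 :=
      Nat.ceil_lt_add_one (by positivity)
    have h2 : (1:ℝ) ≤ (n:ℝ) / ε := by
      rw [le_div_iff₀ hε]; linarith
    have h3 : 2 * ((⌈4 * (n:ℝ) / ε⌉₊ : ℝ) + 1) + 1 < 8 * ((n:ℝ) / ε) + 5 := by
      have : 4 * (n:ℝ) / ε = 4 * ((n:ℝ)/ε) := by ring
      linarith [this ▸ h1]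
    have h4 : (8:ℝ) * ((n:ℝ) / ε) + 5 ≤ 13 * ((n:ℝ) / ε) := by linarith
    have h5 : 13 * ((n:ℝ) / ε) = 13 * (n:ℝ) / ε := by ring
    linarith
  have hkey : (gridN n ε : ℝ) * (4 * ε) ^ d ≤ 1 / 2 := by
    have h40 : (0:ℝ) < 4 * ε := by linarith
    have hmul : (4 * ε) ^ d = (4:ℝ) ^ d * ε ^ d :=
      Real.mul_rpow (by norm_num) hε.le
    have hsplit : ε ^ d = ε ^ (n - 1 : ℕ) * ε ^ e := by
      have h1 : d = ((n - 1 : ℕ) : ℝ) + e := by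
        rw [he_def]
        have : ((n - 1 : ℕ) : ℝ) = (n:ℝ) - 1 := by
          have := Nat.cast_sub hn (R := ℝ); push_cast at this ⊢; linarith
        rw [this]; ring
      rw [h1, Real.rpow_add hε, Real.rpow_natCast]
    have hgp : (13 * (n:ℝ) / ε) ^ (n - 1) * ε ^ (n - 1 : ℕ) = (13 * (n:ℝ)) ^ (n - 1) := by
      rw [div_pow, div_mul_eq_mul_div, mul_div_assoc, div_self (by positivity), mul_one]
    have hεe : ε ^ e ≤ 1 / (2 * B) := by
      have h1 : ε ^ e ≤ η ^ e := Real.rpow_le_rpow hε.le (min_le_right _ _) he.le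
      have h2 : η ^ e = 1 / (2 * B) := by
        rw [hη_def, ← Real.rpow_mul (by positivity), one_div_mul_cancel he.ne',
          Real.rpow_one]
      linarith
    calc (gridN n ε : ℝ) * (4 * ε) ^ d
        ≤ (13 * (n:ℝ) / ε) ^ (n - 1) * (4 * ε) ^ d := by
          refine mul_le_mul_of_nonneg_right hgrid ?_
          exact Real.rpow_nonneg h40.le d
      _ = (13 * (n:ℝ)) ^ (n - 1) * (4:ℝ) ^ d * ε ^ e := by
          rw [hmul, hsplit]
          rw [show (13 * (n:ℝ) / ε) ^ (n - 1) * ((4:ℝ) ^ d * (ε ^ (n-1:ℕ) * ε ^ e))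
            = ((13 * (n:ℝ) / ε) ^ (n - 1) * ε ^ (n-1:ℕ)) * (4:ℝ) ^ d * ε ^ e by ring, hgp]
      _ = B * ε ^ e := by rw [hB_def]
      _ ≤ B * (1 / (2 * B)) := by
          refine mul_le_mul_of_nonneg_left hεe hB.le
      _ = 1 / 2 := by field_simp
  -- convert to ENNReal
  have h40 : (0:ℝ) < 4 * ε := by linarith
  have hconv : (gridN n ε : ℝ≥0∞) * (ENNReal.ofReal (4 * ε)) ^ d
      = ENNReal.ofReal ((gridN n ε : ℝ) * (4 * ε) ^ d) := by
    rw [ENNReal.ofReal_rpow_of_pos h40, ENNReal.ofReal_mul (by positivity),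
      ← ENNReal.ofReal_natCast (gridN n ε)]
  rw [hconv]
  calc ENNReal.ofReal ((gridN n ε : ℝ) * (4 * ε) ^ d) ≤ ENNReal.ofReal (1/2) :=
        ENNReal.ofReal_le_ofReal hkey
    _ < 1 := by
        rw [show (1:ℝ≥0∞) = ENNReal.ofReal 1 by simp]
        exact ENNReal.ofReal_lt_ofReal_iff_of_nonneg (by norm_num) |>.2 (by norm_num)


end KPTAux

open KPT in
/-- If every point of `Σ ⊆ ℝⁿ` satisfies `lim_{r→0} β_Σ(Q,r) = 0`, then `dim_H Σ ≤ n-1`. -/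
theorem stmt4 {n : ℕ} (S : Set (Euc n))
    (h : ∀ Q ∈ S, Filter.Tendsto (fun r => betaSet S Q r) (nhdsWithin 0 (Set.Ioi 0))
      (nhds 0)) :
    dimH S ≤ (n : ℝ≥0∞) - 1 := by
  rcases Nat.eq_zero_or_pos n with hn0 | hn
  · subst hn0
    haveI : Subsingleton (Euc 0) := ⟨fun a b => by ext i; exact i.elim0⟩
    have hsub : S.Subsingleton := fun a _ b _ => Subsingleton.elim a b
    rw [hsub.dimH_zero]
    exact zero_le
  · apply dimH_le
    intro d' hd'
    by_contra hlt
    rw [not_le] at hlt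
    -- translate to a real inequality
    have hcast : ((n - 1 : ℕ) : ℝ≥0∞) = (n : ℝ≥0∞) - 1 := by
      have h1 : (n : ℝ≥0∞) = ((n - 1 : ℕ) : ℝ≥0∞) + 1 := by
        rw [← Nat.cast_one (R := ℝ≥0∞), ← Nat.cast_add]
        congr 1
        omega
      rw [h1, ENNReal.add_sub_cancel_right ENNReal.one_ne_top]
    rw [← hcast] at hlt
    have hlt2 : ((n - 1 : ℕ) : ℝ≥0) < d' := by
      have := hlt
      rw [← ENNReal.coe_natCast (n-1)] at this
      exact_mod_cast this
    have hreal : (n : ℝ) - 1 < (d' : ℝ) := by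
      have h2 : ((n - 1 : ℕ) : ℝ) < (d' : ℝ) := by exact_mod_cast hlt2
      have h3 : ((n - 1 : ℕ) : ℝ) = (n : ℝ) - 1 := by
        have := Nat.cast_sub hn (R := ℝ); push_cast at this ⊢; linarith
      linarith [h3 ▸ h2]
    set d : ℝ := (d' : ℝ) with hd_def
    have hn1 : (1:ℝ) ≤ (n:ℝ) := by exact_mod_cast hn
    have hd0 : 0 < d := by nlinarith
    obtain ⟨ε, hε, hε4, hθ⟩ := KPTAux.exists_eps hn hreal
    -- the pieces
    set Gm : ℕ → Set (Euc n) := fun m =>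
      {Q ∈ S | ∀ r : ℝ, 0 < r → r ≤ 1/((m:ℝ)+1) → betaSet S Q r < ε} with hGm_def
    have hcup : S ⊆ ⋃ m, Gm m := by
      intro Q hQ
      have hev : ∀ᶠ r in nhdsWithin 0 (Set.Ioi 0), betaSet S Q r < ε :=
        (h Q hQ).eventually_lt_const hε
      rw [eventually_nhdsWithin_iff, Metric.eventually_nhds_iff] at hev
      obtain ⟨δ, hδ, hball⟩ := hev
      obtain ⟨m, hm⟩ := exists_nat_one_div_lt hδ
      refine mem_iUnion.2 ⟨m, hQ, fun r hr hrle => ?_⟩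
      refine hball ?_ hr
      rw [Real.dist_eq, sub_zero, abs_of_pos hr]
      calc r ≤ 1/((m:ℝ)+1) := hrle
        _ < δ := hm
    have hGm0 : ∀ m, μH[d] (Gm m) = 0 := by
      intro m
      set τ : ℝ := 1/((m:ℝ)+1) with hτ_def
      have hτ : 0 < τ := by rw [hτ_def]; positivity
      obtain ⟨D, hDc, hDd⟩ := TopologicalSpace.exists_countable_dense (Euc n)
      have hcov : Gm m ⊆ ⋃ g ∈ D, (Gm m ∩ ball g (τ/2)) := by
        intro Q hQ
        obtain ⟨g, hg1, hg2⟩ := Metric.dense_iff.1 hDd Q (τ/2) (by positivity)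
        exact mem_iUnion₂.2 ⟨g, hg2, hQ, by
          rw [mem_ball, dist_comm]; exact mem_ball.1 hg1⟩
      refine measure_mono_null hcov ((measure_biUnion_null_iff hDc).2 ?_)
      intro g hg
      rcases (Gm m ∩ ball g (τ/2)).eq_empty_or_nonempty with hemp | ⟨a, haG, hab⟩
      · rw [hemp]; exact measure_empty
      · have hsubset : Gm m ∩ ball g (τ/2) ⊆ Gm m ∩ ball a τ := by
          rintro z ⟨hz1, hz2⟩
          refine ⟨hz1, mem_ball.2 ?_⟩
          have h1 := mem_ball.1 hz2
          have h2 := mem_ball.1 hab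
          calc dist z a ≤ dist z g + dist g a := dist_triangle _ _ _
            _ = dist z g + dist a g := by rw [dist_comm g a]
            _ < τ/2 + τ/2 := by linarith
            _ = τ := by ring
        refine measure_mono_null hsubset ?_
        refine KPTAux.piece_null hn hd0 (fun Q hQ => hQ.1) hε hε4 hτ hθ ?_ haG
        intro Q hQ r hr hrle
        exact hQ.2 r hr hrle
    have hS0 : μH[d] S = 0 :=
      measure_mono_null hcup (measure_iUnion_null hGm0)
    rw [hd'] at hS0  -- hd' : μH[↑d'] S = ⊤ ; hS0 : μH[d] S = 0
    exact ENNReal.top_ne_zero hS0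
end
end

section
/- Let n ≥ 2, let Ω⁺ ⊂ ℝ^n be open with Ω⁻ = int((Ω⁺)^c) and ∂Ω⁺ = ∂Ω⁻ = ∂Ω, and let Q ∈ ∂Ω. Assume: (a) there exist M > 1 and r₀ > 0 such that for every r < r₀ there are points A⁺(Q,r) and A⁻(Q,r) with B(A^±(Q,r), r/M) ⊂ Ω^± ∩ B(Q,r) (a two-sided corkscrew condition at Q); and (b) lim_{r→0} β_∞(Q,r) = 0. Then the lower (n−1)-density of H^{n−1}⌐∂Ω at Q is at least 1: liminf_{r→0} H^{n−1}(∂Ω ∩ B(Q,r)) / (ω_{n−1} r^{n−1}) ≥ 1, where ω_{n−1} is the Lebesgue measure of the unit ball of ℝ^{n−1}. -/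
open MeasureTheory Metric Filter Set Topology
open scoped ENNReal NNReal Classical

noncomputable section

open scoped RealInnerProductSpace

set_option maxHeartbeats 1000000

lemma vol_le_hausdorff (m : ℕ) (A : Set (EuclideanSpace ℝ (Fin m))) :
    volume A ≤ μH[(m : ℝ)] A := by
  have hpi : (volume : Measure (Fin m → ℝ)) = μH[(m : ℝ)] := by
    rw [← hausdorffMeasure_pi_real]
    congr 1
    simp
  set e := (MeasurableEquiv.toLp 2 (Fin m → ℝ)).symm with he
  have h1 : volume (⇑e '' A) = volume A := by
    rw [MeasurableEquiv.image_eq_preimage_symm]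
    exact ((EuclideanSpace.volume_preserving_symm_measurableEquiv_toLp (Fin m)).symm
      _).measure_preimage_emb
      (MeasurableEquiv.measurableEmbedding _) A
  have hlip : LipschitzWith 1 ⇑e := by
    rw [he]
    exact PiLp.lipschitzWith_ofLp 2 _
  have h2 : μH[(m : ℝ)] (⇑e '' A) ≤ μH[(m : ℝ)] A := by
    simpa using hlip.hausdorffMeasure_image_le (by positivity) A
  calc volume A = volume (⇑e '' A) := h1.symm
    _ = μH[(m : ℝ)] (⇑e '' A) := by rw [hpi]
    _ ≤ μH[(m : ℝ)] A := h2

lemma proj_norm_le {n : ℕ} (W : Submodule ℝ (Euc n)) (v : Euc n) :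
    ‖((W.orthogonalProjectionOnto v : W) : Euc n)‖ ≤ ‖v‖ := by
  calc ‖((W.orthogonalProjectionOnto v : W) : Euc n)‖ = ‖W.orthogonalProjectionOnto v‖ := rfl
    _ ≤ ‖W.orthogonalProjectionOnto‖ * ‖v‖ := W.orthogonalProjectionOnto.le_opNorm v
    _ ≤ 1 * ‖v‖ := mul_le_mul_of_nonneg_right (Submodule.orthogonalProjectionOnto_norm_le W) (norm_nonneg v)
    _ = ‖v‖ := one_mul _

lemma hmeas_plane_ball {n : ℕ} (hn : 1 ≤ n) (W : Submodule ℝ (Euc n))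
    (hW : Module.finrank ℝ W = n - 1) (Q : Euc n) (s : ℝ) :
    volume (ball (0 : EuclideanSpace ℝ (Fin (n - 1))) s)
      ≤ μH[((n - 1 : ℕ) : ℝ)] ({y : Euc n | y - Q ∈ W} ∩ ball Q s) := by
  let J : EuclideanSpace ℝ (Fin (n - 1)) ≃ₗᵢ[ℝ] W :=
    ((stdOrthonormalBasis ℝ W).reindex (finCongr hW)).repr.symm
  let g : EuclideanSpace ℝ (Fin (n - 1)) → Euc n := fun x => Q + (J x : Euc n)
  have hg : Isometry g := by
    refine Isometry.of_dist_eq fun x y => ?_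
    have h1 : g x - g y = ((J x - J y : W) : Euc n) := by
      simp only [g, add_sub_add_left_eq_sub, Submodule.coe_sub]
    rw [dist_eq_norm, h1]
    calc ‖((J x - J y : W) : Euc n)‖ = ‖J x - J y‖ := rfl
      _ = ‖J (x - y)‖ := by rw [map_sub]
      _ = ‖x - y‖ := J.norm_map _
      _ = dist x y := (dist_eq_norm _ _).symm
  have himg : g '' ball 0 s = {y : Euc n | y - Q ∈ W} ∩ ball Q s := by
    ext y
    constructor
    · rintro ⟨x, hx, rfl⟩
      refine ⟨by simp [g], ?_⟩
      rw [mem_ball, dist_eq_norm]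
      have : g x - Q = (J x : Euc n) := by simp [g]
      rw [this]
      calc ‖((J x : W) : Euc n)‖ = ‖J x‖ := rfl
        _ = ‖x‖ := J.norm_map _
        _ < s := by simpa [dist_eq_norm] using hx
    · rintro ⟨hyW, hyB⟩
      refine ⟨J.symm ⟨y - Q, hyW⟩, ?_, ?_⟩
      · rw [mem_ball, dist_zero_right, J.symm.norm_map]
        calc ‖(⟨y - Q, hyW⟩ : W)‖ = ‖y - Q‖ := rfl
          _ < s := by simpa [dist_eq_norm] using hyB
      · simp only [g, LinearIsometryEquiv.apply_symm_apply]
        simp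
  calc volume (ball (0 : EuclideanSpace ℝ (Fin (n - 1))) s)
      ≤ μH[((n - 1 : ℕ) : ℝ)] (ball (0 : EuclideanSpace ℝ (Fin (n - 1))) s) :=
        vol_le_hausdorff (n - 1) _
    _ = μH[((n - 1 : ℕ) : ℝ)] (g '' ball 0 s) :=
        (hg.hausdorffMeasure_image (Or.inl (by positivity)) _).symm
    _ = _ := by rw [himg]

lemma frontier_compl_sub {n : ℕ} {Ω : Set (Euc n)} (hop : IsOpen Ω) :
    ∀ (S : Set (Euc n)), IsPreconnected S → (∀ x ∈ S, x ∉ frontier Ω) →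
      S ⊆ Ω ∨ S ⊆ interior Ωᶜ := by
  intro S hS hdisj
  refine hS.subset_or_subset hop isOpen_interior ?_ ?_
  · exact Set.disjoint_left.2 fun x hx hx' => (interior_subset hx' : x ∈ Ωᶜ) hx
  · intro x hx
    by_cases hc : x ∈ closure Ωᶜ
    · by_cases hc2 : x ∈ closure Ω
      · exact absurd (by rw [frontier_eq_closure_inter_closure]; exact ⟨hc2, hc⟩) (hdisj x hx)
      · exact Or.inr (by rw [interior_compl]; exact hc2)
    · left
      have hx2 : x ∈ interior Ω := by
        rw [closure_compl] at hc
        simpa using hc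
      rwa [hop.interior_eq] at hx2

lemma core_bound {n : ℕ} (hn : 2 ≤ n) {Ω : Set (Euc n)} (hop : IsOpen Ω)
    {Q : Euc n} {r ε : ℝ} (hr : 0 < r) (hε : 0 < ε) (hε2 : ε < 1/2)
    {W : Submodule ℝ (Euc n)} (hW : Module.finrank ℝ W = n - 1)
    {e : Euc n} (he1 : ‖e‖ = 1) (horth : ∀ w ∈ W, ⟪w, e⟫ = 0)
    (hslab : ∀ x ∈ frontier Ω ∩ ball Q r, |⟪x - Q, e⟫| < ε * r)
    {Ap Am : Euc n} (hApΩ : Ap ∈ Ω) (hApB : Ap ∈ ball Q r)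
    (hAmΩ : Am ∈ interior Ωᶜ) (hAmB : Am ∈ ball Q r)
    (ha : ε * r < ⟪Ap - Q, e⟫) (hb : ε * r < |⟪Am - Q, e⟫|) :
    volume (ball (0 : EuclideanSpace ℝ (Fin (n - 1))) ((1 - 2*ε) * r))
      ≤ μH[((n - 1 : ℕ) : ℝ)] (frontier Ω ∩ ball Q r) := by
  have hεr : 0 < ε * r := by positivity
  -- convexity of slab sides
  have hlin : IsLinearMap ℝ (fun x : Euc n => ⟪x, e⟫) :=
    ⟨fun a b => inner_add_left a b e, fun c x => real_inner_smul_left x e c⟩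
  have hconvg : ∀ c : ℝ, Convex ℝ {x : Euc n | c < ⟪x - Q, e⟫} := by
    intro c
    have hset : {x : Euc n | c < ⟪x - Q, e⟫} = {x : Euc n | c + ⟪Q, e⟫ < ⟪x, e⟫} := by
      ext x
      simp only [Set.mem_setOf_eq, inner_sub_left]
      constructor <;> intro h <;> linarith
    rw [hset]
    exact convex_halfSpace_gt hlin _
  have hconvl : ∀ c : ℝ, Convex ℝ {x : Euc n | ⟪x - Q, e⟫ < c} := by
    intro c
    have hset : {x : Euc n | ⟪x - Q, e⟫ < c} = {x : Euc n | ⟪x, e⟫ < c + ⟪Q, e⟫} := by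
      ext x
      simp only [Set.mem_setOf_eq, inner_sub_left]
      constructor <;> intro h <;> linarith
    rw [hset]
    exact convex_halfSpace_lt hlin _
  set Up : Set (Euc n) := ball Q r ∩ {x : Euc n | ε * r < ⟪x - Q, e⟫} with hUp_def
  set Um : Set (Euc n) := ball Q r ∩ {x : Euc n | ⟪x - Q, e⟫ < -(ε * r)} with hUm_def
  have hUpF : ∀ x ∈ Up, x ∉ frontier Ω := fun x hx hfx =>
    absurd (hslab x ⟨hfx, hx.1⟩) (not_lt.2 (le_trans hx.2.le (le_abs_self _)))
  have hUmF : ∀ x ∈ Um, x ∉ frontier Ω := by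
    intro x hx hfx
    refine absurd (hslab x ⟨hfx, hx.1⟩) (not_lt.2 ?_)
    have h2 : ⟪x - Q, e⟫ < -(ε * r) := hx.2
    exact le_abs.2 (Or.inr (by linarith))
  -- the two slabs lie in Ω and in the complement respectively
  have hUp : Up ⊆ Ω := by
    rcases frontier_compl_sub hop Up
        (((convex_ball Q r).inter (hconvg (ε * r))).isPreconnected) hUpF with h | h
    · exact h
    · exact absurd (interior_subset (h ⟨hApB, ha⟩) : Ap ∈ Ωᶜ) (by simpa using hApΩ)
  have hbneg : ⟪Am - Q, e⟫ < -(ε * r) := by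
    rcases lt_abs.1 hb with h | h
    · exfalso
      exact (interior_subset (hAmΩ) : Am ∈ Ωᶜ) (hUp ⟨hAmB, h⟩)
    · linarith
  have hUm : Um ⊆ interior Ωᶜ := by
    rcases frontier_compl_sub hop Um
        (((convex_ball Q r).inter (hconvl (-(ε * r)))).isPreconnected) hUmF with h | h
    · exact absurd (h ⟨hAmB, hbneg⟩ : Am ∈ Ω) ((interior_subset hAmΩ : Am ∈ Ωᶜ))
    · exact h
  -- the orthogonal projection onto the plane Q + W
  set P := W.orthogonalProjectionOnto with hP_def
  set π : Euc n → Euc n := fun x => Q + (P (x - Q) : Euc n) with hπ_def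
  have hπlip : LipschitzWith 1 π := by
    refine LipschitzWith.of_dist_le_mul fun x y => ?_
    have h1 : π x - π y = ((P (x - y) : W) : Euc n) := by
      simp only [hπ_def, add_sub_add_left_eq_sub, ← Submodule.coe_sub, ← map_sub,
        sub_sub_sub_cancel_right]
    rw [dist_eq_norm, dist_eq_norm, h1, NNReal.coe_one, one_mul]
    exact proj_norm_le W (x - y)
  have heWo : e ∈ Wᗮ := (Submodule.mem_orthogonal W e).2 horth
  have hPe : P e = 0 := Submodule.orthogonalProjectionOnto_apply_of_mem_orthogonal heWo
  have hPW : ∀ w, ∀ hw : w ∈ W, (P w : Euc n) = w := by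
    intro w hw
    rw [show w = ((⟨w, hw⟩ : W) : Euc n) from rfl, Submodule.orthogonalProjectionOnto_mem_subspace_eq_self]
  -- covering the planar disk by the projection of the frontier
  have hcover : {y : Euc n | y - Q ∈ W} ∩ ball Q ((1 - 2*ε) * r)
      ⊆ π '' (frontier Ω ∩ ball Q r) := by
    rintro y ⟨hyW, hyB⟩
    set f : ℝ → Euc n := fun t => y + t • e with hf_def
    have hfsub : ∀ t : ℝ, f t - Q = (y - Q) + t • e := by
      intro t; simp only [hf_def]; abel
    have horthy : ⟪y - Q, e⟫ = 0 := horth _ hyW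
    have hyQ : ‖y - Q‖ < (1 - 2*ε) * r := by
      rw [mem_ball, dist_eq_norm] at hyB; exact hyB
    have hfball : ∀ t ∈ Icc (-(2*ε*r)) (2*ε*r), f t ∈ ball Q r := by
      intro t ht
      have hnorm2 : ‖f t - Q‖^2 = ‖y - Q‖^2 + t^2 := by
        rw [hfsub t, norm_add_sq_real, inner_smul_right, horthy, norm_smul, he1]
        simp [mul_pow, sq_abs]
      have h1 : ‖y - Q‖^2 < ((1 - 2*ε) * r)^2 :=
        pow_lt_pow_left₀ hyQ (norm_nonneg _) two_ne_zero
      have h2 : t^2 ≤ (2*ε*r)^2 := sq_le_sq' ht.1 ht.2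
      have h3 : ‖f t - Q‖^2 < r^2 := by rw [hnorm2]; nlinarith
      rw [mem_ball, dist_eq_norm]
      exact lt_of_pow_lt_pow_left₀ 2 hr.le h3
    have hinner : ∀ t : ℝ, ⟪f t - Q, e⟫ = t := by
      intro t
      rw [hfsub t, inner_add_left, horthy, real_inner_smul_left,
        real_inner_self_eq_norm_mul_norm, he1]
      ring
    have h2εr : 0 < 2*ε*r := by positivity
    have htopIcc : (2*ε*r) ∈ Icc (-(2*ε*r)) (2*ε*r) := ⟨by linarith, le_refl _⟩
    have hbotIcc : (-(2*ε*r)) ∈ Icc (-(2*ε*r)) (2*ε*r) := ⟨le_refl _, by linarith⟩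
    have htop : f (2*ε*r) ∈ Up := by
      refine ⟨hfball _ htopIcc, ?_⟩
      show ε * r < ⟪f (2*ε*r) - Q, e⟫
      rw [hinner]; nlinarith
    have hbot : f (-(2*ε*r)) ∈ Um := by
      refine ⟨hfball _ hbotIcc, ?_⟩
      show ⟪f (-(2*ε*r)) - Q, e⟫ < -(ε * r)
      rw [hinner]; nlinarith
    have hSpre : IsPreconnected (f '' Icc (-(2*ε*r)) (2*ε*r)) :=
      isPreconnected_Icc.image f (Continuous.continuousOn (by continuity))
    obtain ⟨z, hzS, hzF⟩ : ∃ z ∈ f '' Icc (-(2*ε*r)) (2*ε*r), z ∈ frontier Ω := by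
      by_contra hcon
      push_neg at hcon
      rcases frontier_compl_sub hop _ hSpre hcon with hsΩ | hsC
      · exact (interior_subset (hUm hbot) : f (-(2*ε*r)) ∈ Ωᶜ)
          (hsΩ (mem_image_of_mem f hbotIcc))
      · exact (interior_subset (hsC (mem_image_of_mem f htopIcc)) : f (2*ε*r) ∈ Ωᶜ)
          (hUp htop)
    obtain ⟨t, ht, rfl⟩ := hzS
    refine ⟨f t, ⟨hzF, hfball t ht⟩, ?_⟩
    show Q + (P (f t - Q) : Euc n) = y
    rw [hfsub t, map_add, _root_.map_smul, hPe, smul_zero, add_zero, hPW _ hyW]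
    abel
  -- conclude
  calc volume (ball (0 : EuclideanSpace ℝ (Fin (n - 1))) ((1 - 2*ε) * r))
      ≤ μH[((n - 1 : ℕ) : ℝ)] ({y : Euc n | y - Q ∈ W} ∩ ball Q ((1 - 2*ε) * r)) :=
        hmeas_plane_ball (by omega) W hW Q _
    _ ≤ μH[((n - 1 : ℕ) : ℝ)] (π '' (frontier Ω ∩ ball Q r)) := measure_mono hcover
    _ ≤ ((1 : ℝ≥0) : ℝ≥0∞) ^ ((n - 1 : ℕ) : ℝ) * μH[((n - 1 : ℕ) : ℝ)] (frontier Ω ∩ ball Q r) :=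
        hπlip.hausdorffMeasure_image_le (by positivity) _
    _ = μH[((n - 1 : ℕ) : ℝ)] (frontier Ω ∩ ball Q r) := by
        rw [ENNReal.coe_one, ENNReal.one_rpow, one_mul]

lemma keyB {n : ℕ} (hn : 2 ≤ n) {Ω : Set (Euc n)} (hop : IsOpen Ω)
    {Q : Euc n} (hQ : Q ∈ frontier Ω) {M r ε : ℝ} (hM : 1 < M) (hr : 0 < r)
    (hε : 0 < ε) (hε2 : ε < 1/2) (hεM : ε < 1/(2*M))
    {Ap Am : Euc n} (hAp : ball Ap (r / M) ⊆ Ω ∩ ball Q r)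
    (hAm : ball Am (r / M) ⊆ interior Ωᶜ ∩ ball Q r)
    {W : Submodule ℝ (Euc n)} (hW : Module.finrank ℝ W = n - 1)
    (hHD : hausdorffDist (frontier Ω ∩ ball Q r)
      ({y : Euc n | y - Q ∈ W} ∩ ball Q r) < ε * r) :
    volume (ball (0 : EuclideanSpace ℝ (Fin (n - 1))) ((1 - 2*ε) * r))
      ≤ μH[((n - 1 : ℕ) : ℝ)] (frontier Ω ∩ ball Q r) := by
  have hM0 : (0:ℝ) < M := by linarith
  have hrM : 0 < r / M := div_pos hr hM0
  have hApm := hAp (mem_ball_self hrM)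
  have hAmm := hAm (mem_ball_self hrM)
  -- a unit normal vector to W
  have hWfr : Module.finrank ℝ (Wᗮ : Submodule ℝ (Euc n)) = 1 := by
    have h1 := W.finrank_add_finrank_orthogonal
    rw [hW, finrank_euclideanSpace_fin] at h1
    omega
  obtain ⟨v, hv, hv0⟩ : ∃ v ∈ Wᗮ, v ≠ (0 : Euc n) := by
    by_contra h
    push_neg at h
    have hbot : Wᗮ = ⊥ := (Submodule.eq_bot_iff _).2 h
    rw [hbot] at hWfr
    simp [finrank_bot] at hWfr
  have hv0' : ‖v‖ ≠ 0 := norm_ne_zero_iff.2 hv0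
  set e : Euc n := ‖v‖⁻¹ • v with he_def
  have he1 : ‖e‖ = 1 := by
    rw [he_def, norm_smul, norm_inv, norm_norm, inv_mul_cancel₀ hv0']
  have heW : e ∈ Wᗮ := Submodule.smul_mem _ _ hv
  have horth : ∀ w ∈ W, ⟪w, e⟫ = 0 := (Submodule.mem_orthogonal W e).1 heW
  have he0 : e ≠ 0 := by
    intro h
    rw [h, norm_zero] at he1
    norm_num at he1
  have hspan : (ℝ ∙ e) = Wᗮ := by
    apply Submodule.eq_of_le_of_finrank_le ((Submodule.span_le).2 (by simpa using heW))
    rw [finrank_span_singleton he0, hWfr]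
  -- frontier points lie in the slab
  have hQQ : Q ∈ frontier Ω ∩ ball Q r := ⟨hQ, mem_ball_self hr⟩
  have hQL : Q ∈ {y : Euc n | y - Q ∈ W} ∩ ball Q r := ⟨by simp, mem_ball_self hr⟩
  have hfin : EMetric.hausdorffEdist (frontier Ω ∩ ball Q r)
      ({y : Euc n | y - Q ∈ W} ∩ ball Q r) ≠ ⊤ :=
    hausdorffEdist_ne_top_of_nonempty_of_bounded ⟨Q, hQQ⟩ ⟨Q, hQL⟩
      (isBounded_ball.subset inter_subset_right) (isBounded_ball.subset inter_subset_right)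
  have hslab : ∀ x ∈ frontier Ω ∩ ball Q r, |⟪x - Q, e⟫| < ε * r := by
    intro x hx
    obtain ⟨y, hy, hxy⟩ := exists_dist_lt_of_hausdorffDist_lt hx hHD hfin
    have h0 : ⟪y - Q, e⟫ = 0 := horth _ hy.1
    have hxyQ : ⟪x - y, e⟫ = ⟪x - Q, e⟫ - ⟪y - Q, e⟫ := by
      rw [← inner_sub_left, sub_sub_sub_cancel_right]
    calc |⟪x - Q, e⟫| = |⟪x - y, e⟫| := by rw [hxyQ, h0, sub_zero]
      _ ≤ ‖x - y‖ * ‖e‖ := abs_real_inner_le_norm _ _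
      _ = dist x y := by rw [he1, mul_one, dist_eq_norm]
      _ < ε * r := hxy
  -- frontier points are not in Ω nor in interior Ωᶜ
  have hfrnot : ∀ z ∈ frontier Ω, z ∉ Ω := by
    intro z hz hzΩ
    rw [hop.frontier_eq] at hz
    exact hz.2 hzΩ
  have hfrnot' : ∀ z ∈ frontier Ω, z ∉ interior Ωᶜ := fun z hz hzi =>
    (interior_compl (s := Ω) ▸ hzi : z ∈ (closure Ω)ᶜ) (frontier_subset_closure hz)
  have hdistp : ∀ z ∈ frontier Ω, r / M ≤ dist Ap z := by
    intro z hz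
    by_contra h
    push_neg at h
    exact hfrnot z hz (hAp (mem_ball'.2 h)).1
  have hdistm : ∀ z ∈ frontier Ω, r / M ≤ dist Am z := by
    intro z hz
    by_contra h
    push_neg at h
    exact hfrnot' z hz (hAm (mem_ball'.2 h)).1
  -- corkscrew points are far from the plane
  have hkey : ∀ A : Euc n, A ∈ ball Q r → (∀ z ∈ frontier Ω, r / M ≤ dist A z) →
      ε * r < |⟪A - Q, e⟫| := by
    intro A hA hdist
    set p : Euc n := Q + ((W.orthogonalProjectionOnto (A - Q) : W) : Euc n) with hp_def
    have hpW : p - Q ∈ W := by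
      rw [hp_def, add_sub_cancel_left]
      exact (W.orthogonalProjectionOnto (A - Q)).2
    have hApsub : A - p ∈ Wᗮ := by
      have h1 : (A - Q) - ((W.orthogonalProjectionOnto (A - Q) : W) : Euc n) ∈ Wᗮ :=
        Submodule.sub_starProjection_mem_orthogonal (K := W) (A - Q)
      have h2 : A - p = (A - Q) - ((W.orthogonalProjectionOnto (A - Q) : W) : Euc n) := by
        rw [hp_def]; abel
      rwa [← h2] at h1
    obtain ⟨c, hc⟩ : ∃ c : ℝ, A - p = c • e := by
      obtain ⟨c, hc⟩ := Submodule.mem_span_singleton.1 (hspan ▸ hApsub : A - p ∈ (ℝ ∙ e))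
      exact ⟨c, hc.symm⟩
    have hcval : ⟪A - Q, e⟫ = c := by
      have h3 : ⟪A - p, e⟫ = c := by
        rw [hc, real_inner_smul_left, real_inner_self_eq_norm_mul_norm, he1]
        ring
      have h4 : ⟪A - p, e⟫ = ⟪A - Q, e⟫ - ⟪p - Q, e⟫ := by
        rw [← inner_sub_left, sub_sub_sub_cancel_right]
      rw [horth _ hpW, sub_zero] at h4
      rw [← h4, h3]
    have hdAp : dist A p = |c| := by
      rw [dist_eq_norm, hc, norm_smul, he1, mul_one, Real.norm_eq_abs]
    have hpball : p ∈ ball Q r := by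
      rw [mem_ball, dist_eq_norm, hp_def, add_sub_cancel_left]
      calc ‖((W.orthogonalProjectionOnto (A - Q) : W) : Euc n)‖ ≤ ‖A - Q‖ := proj_norm_le W _
        _ < r := by rw [← dist_eq_norm]; exact mem_ball.1 hA
    obtain ⟨z, hz, hzp⟩ := exists_dist_lt_of_hausdorffDist_lt'
      (show p ∈ {y : Euc n | y - Q ∈ W} ∩ ball Q r from ⟨hpW, hpball⟩) hHD hfin
    have h5 : r / M ≤ dist A z := hdist z hz.1
    have h6 : dist A z ≤ dist A p + dist p z := dist_triangle A p z
    have h7 : dist p z = dist z p := dist_comm p z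
    have h8 : ε * r < r / M - ε * r := by
      have h9 : ε * (2*M) < 1 := (lt_div_iff₀ (by linarith : (0:ℝ) < 2*M)).1 hεM
      have h10 : (2 * (ε * r)) * M < r := by nlinarith
      have h11 : 2 * (ε * r) < r / M := (lt_div_iff₀ hM0).2 h10
      linarith
    calc ε * r < r / M - ε * r := h8
      _ ≤ dist A p := by nlinarith [hzp, h5, h6, h7]
      _ = |c| := hdAp
      _ = |⟪A - Q, e⟫| := by rw [hcval]
  have hap2 := hkey Ap hApm.2 hdistp
  have ham2 := hkey Am hAmm.2 hdistm
  -- orient the normal towards Ap and apply the core bound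
  rcases lt_abs.1 hap2 with hpos | hneg
  · exact core_bound hn hop hr hε hε2 hW he1 horth hslab hApm.1 hApm.2 hAmm.1 hAmm.2 hpos ham2
  · have he1' : ‖-e‖ = 1 := by rw [norm_neg]; exact he1
    have horth' : ∀ w ∈ W, ⟪w, -e⟫ = 0 := fun w hw => by
      rw [inner_neg_right, horth w hw, neg_zero]
    have hslab' : ∀ x ∈ frontier Ω ∩ ball Q r, |⟪x - Q, -e⟫| < ε * r := fun x hx => by
      rw [inner_neg_right, abs_neg]
      exact hslab x hx
    have hpos' : ε * r < ⟪Ap - Q, -e⟫ := by rw [inner_neg_right]; linarith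
    have ham2' : ε * r < |⟪Am - Q, -e⟫| := by rwa [inner_neg_right, abs_neg]
    exact core_bound hn hop hr hε hε2 hW he1' horth' hslab' hApm.1 hApm.2 hAmm.1 hAmm.2
      hpos' ham2'


open KPT in
/-- If `Q ∈ ∂Ω` has two-sided corkscrew points and `β_∞(Q,r) → 0` as `r → 0`, then the lower
`(n-1)`-density of `H^{n-1}⌐∂Ω` at `Q` is at least `1`. -/
theorem stmt17 {n : ℕ} (hn : 2 ≤ n) (Ω : Set (Euc n)) (hop : IsOpen Ω)
    (hfr : frontier (interior Ωᶜ) = frontier Ω) (Q : Euc n) (hQ : Q ∈ frontier Ω)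
    (hcork : ∃ M : ℝ, 1 < M ∧ ∃ r₀ : ℝ, 0 < r₀ ∧ ∀ r : ℝ, 0 < r → r < r₀ →
      ∃ Ap Am : Euc n,
        Metric.ball Ap (r / M) ⊆ Ω ∩ Metric.ball Q r ∧
        Metric.ball Am (r / M) ⊆ interior Ωᶜ ∩ Metric.ball Q r)
    (hβ : Filter.Tendsto (fun r => betaInfty Ω Q r) (nhdsWithin 0 (Set.Ioi 0)) (nhds 0)) :
    1 ≤ Filter.liminf
      (fun r : ℝ => μH[(n : ℝ) - 1] (frontier Ω ∩ Metric.ball Q r) /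
        (volume (Metric.ball (0 : EuclideanSpace ℝ (Fin (n - 1))) 1) *
          ENNReal.ofReal (r ^ ((n : ℝ) - 1))))
      (nhdsWithin 0 (Set.Ioi 0)) := by
  obtain ⟨M, hM, r₀, hr₀, hcw⟩ := hcork
  have hM0 : (0:ℝ) < M := by linarith
  have hplane : ∃ W : Submodule ℝ (Euc n), Module.finrank ℝ W = n - 1 := by
    have h0 : 0 < n := by omega
    set v : Euc n := EuclideanSpace.single (⟨0, h0⟩ : Fin n) (1:ℝ) with hv_def
    have hv : v ≠ 0 := by
      have hnv : ‖v‖ = 1 := by simp [hv_def, EuclideanSpace.norm_single]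
      intro h
      rw [h, norm_zero] at hnv
      norm_num at hnv
    refine ⟨(ℝ ∙ v)ᗮ, ?_⟩
    have h1 := (ℝ ∙ v).finrank_add_finrank_orthogonal
    rw [finrank_span_singleton hv, finrank_euclideanSpace_fin] at h1
    omega
  obtain ⟨W₀, hW₀⟩ := hplane
  haveI hne : Nonempty {W : Submodule ℝ (Euc n) // Module.finrank ℝ W = n - 1} := ⟨⟨W₀, hW₀⟩⟩
  have hcast : ((n - 1 : ℕ) : ℝ) = (n : ℝ) - 1 := by
    have h1 : 1 ≤ n := by omega
    push_cast [Nat.cast_sub h1]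
    ring
  have hω0 : volume (ball (0 : EuclideanSpace ℝ (Fin (n - 1))) 1) ≠ 0 :=
    (measure_ball_pos _ _ one_pos).ne'
  have hωt : volume (ball (0 : EuclideanSpace ℝ (Fin (n - 1))) 1) ≠ ⊤ :=
    measure_ball_lt_top.ne
  have key : ∀ ε : ℝ, 0 < ε → ε < 1/2 → ε < 1/(2*M) →
      ENNReal.ofReal ((1 - 2*ε)^(n - 1)) ≤ Filter.liminf
        (fun r : ℝ => μH[(n : ℝ) - 1] (frontier Ω ∩ Metric.ball Q r) /
          (volume (Metric.ball (0 : EuclideanSpace ℝ (Fin (n - 1))) 1) *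
            ENNReal.ofReal (r ^ ((n : ℝ) - 1))))
        (nhdsWithin 0 (Set.Ioi 0)) := by
    intro ε hε hε2 hεM
    refine Filter.le_liminf_of_le (by isBoundedDefault) ?_
    have hev1 : Set.Ioo (0:ℝ) r₀ ∈ 𝓝[>] (0:ℝ) := Ioo_mem_nhdsGT_of_mem ⟨le_refl 0, hr₀⟩
    have hev2 : {r : ℝ | betaInfty Ω Q r < ε} ∈ 𝓝[>] (0:ℝ) := hβ (Iio_mem_nhds hε)
    filter_upwards [hev1, hev2] with r hrIoo hβr
    obtain ⟨Ap, Am, hAp, hAm⟩ := hcw r hrIoo.1 hrIoo.2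
    have hβr' : betaInfty Ω Q r < ε := hβr
    rw [betaInfty] at hβr'
    obtain ⟨⟨W, hW⟩, hWd⟩ := exists_lt_of_ciInf_lt hβr'
    have hHD : hausdorffDist (frontier Ω ∩ ball Q r)
        ({y : Euc n | y - Q ∈ W} ∩ ball Q r) < ε * r := by
      rw [div_lt_iff₀ hrIoo.1] at hWd
      exact hWd
    have hvol := keyB hn hop hQ hM hrIoo.1 hε hε2 hεM hAp hAm hW hHD
    rw [← hcast, Real.rpow_natCast]
    rw [ENNReal.le_div_iff_mul_le
      (Or.inl (mul_ne_zero hω0 (ENNReal.ofReal_pos.2 (pow_pos hrIoo.1 _)).ne'))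
      (Or.inl (ENNReal.mul_ne_top hωt ENNReal.ofReal_ne_top))]
    refine le_trans ?_ hvol
    rw [Measure.addHaar_ball_of_pos _ _ (mul_pos (by linarith) hrIoo.1 : (0:ℝ) < (1 - 2*ε) * r)]
    rw [finrank_euclideanSpace_fin, mul_pow,
      ENNReal.ofReal_mul (pow_nonneg (by linarith) _)]
    exact le_of_eq (by ring)
  set ε₁ := min (1/4 : ℝ) (1/(4*M)) with hε₁_def
  have hε₁ : 0 < ε₁ := lt_min (by norm_num) (by positivity)
  have hlim : Tendsto (fun ε : ℝ => ENNReal.ofReal ((1 - 2*ε)^(n - 1)))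
      (𝓝[>] (0:ℝ)) (𝓝 1) := by
    have hc : Continuous fun ε : ℝ => ENNReal.ofReal ((1 - 2*ε)^(n - 1)) :=
      ENNReal.continuous_ofReal.comp (by continuity)
    have h2 := hc.tendsto 0
    simp only [mul_zero, sub_zero, one_pow, ENNReal.ofReal_one] at h2
    exact h2.mono_left nhdsWithin_le_nhds
  refine le_of_tendsto hlim ?_
  filter_upwards [Ioo_mem_nhdsGT_of_mem (⟨le_refl (0:ℝ), hε₁⟩ : (0:ℝ) ∈ Set.Ico 0 ε₁)]
    with ε hεI
  refine key ε hεI.1 ?_ ?_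
  · refine lt_of_lt_of_le hεI.2 ((min_le_left _ _).trans (by norm_num))
  · refine lt_of_lt_of_le hεI.2 ((min_le_right _ _).trans ?_)
    apply one_div_le_one_div_of_le (by linarith) (by linarith)
end
end
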